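/- arXiv:2103.01490 — 2 statements merged into one kernel-verified Lean document; each statement's English description precedes it below -/
import Mathlib

section
/- Swapping can be postponed past extension: if P ∼_S P' ≤ Q for GR-processes P, P', Q of a net, then there exists a GR-process Q' with P ≤ Q' ∼_S Q. -/
/-- A place/transition net: places `S`, transitions `T`, flow relation given by
`pre t s = F(s,t)` and `post t s = F(t,s)`, and initial marking `M0`. Every
transition has a finite non-empty multiset of preplaces and a finite multiset
of postplaces. -/
structure Net where
  S : Type
  T : Type
  pre : T → S → ℕ
  post : T → S → ℕ
  M0 : S → ℕ
  pre_fin : ∀ t, (Function.support (pre t)).Finite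
  pre_ne : ∀ t, ∃ s, 0 < pre t s
  post_fin : ∀ t, (Function.support (post t)).Finite

namespace Net

/-- `•G`, the preset of a finite multiset of transitions. -/
def preStep (N : Net) (G : N.T →₀ ℕ) : N.S → ℕ := fun s => G.sum fun t n => n * N.pre t s

/-- `G•`, the postset of a finite multiset of transitions. -/
def postStep (N : Net) (G : N.T →₀ ℕ) : N.S → ℕ := fun s => G.sum fun t n => n * N.post t s

/-- `G` is enabled at marking `M` : `•G ⊆ M`. -/
def Enabled (N : Net) (M : N.S → ℕ) (G : N.T →₀ ℕ) : Prop := ∀ s, N.preStep G s ≤ M s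

/-- `M —G→ M'` : the non-empty finite multiset `G` is a step from `M` to `M'`. -/
def Step (N : Net) (M : N.S → ℕ) (G : N.T →₀ ℕ) (M' : N.S → ℕ) : Prop :=
  G ≠ 0 ∧ N.Enabled M G ∧ ∀ s, M' s = M s - N.preStep G s + N.postStep G s

/-- Firing a single transition. -/
def Fire (N : Net) (M : N.S → ℕ) (t : N.T) (M' : N.S → ℕ) : Prop :=
  N.Step M (Finsupp.single t 1) M'

/-- Markings reachable from the initial marking by firing single transitions. -/
def Reachable (N : Net) (M : N.S → ℕ) : Prop :=
  Relation.ReflTransGen (fun M₁ M₂ => ∃ t, N.Fire M₁ t M₂) N.M0 M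

/-- The finite non-empty multiset `G` is in semantic conflict at `M`. -/
def Conflict (N : Net) (M : N.S → ℕ) (G : N.T →₀ ℕ) : Prop :=
  G ≠ 0 ∧ ¬ N.Enabled M G ∧ ∀ t, 0 < G t → N.Enabled M (Finsupp.single t (G t))

def ConflictFree (N : Net) : Prop := ∀ M, N.Reachable M → ∀ G, ¬ N.Conflict M G

def BinaryConflictFree (N : Net) : Prop :=
  ∀ M, N.Reachable M → ∀ G : N.T →₀ ℕ, (G.sum fun _ n => n) = 2 → ¬ N.Conflict M G

/-- Structural conflict net: transitions occurring together in a step at a reachable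
marking have disjoint presets. -/
def StructuralConflictNet (N : Net) : Prop :=
  ∀ t u : N.T,
    (∃ M, N.Reachable M ∧ N.Enabled M (Finsupp.single t 1 + Finsupp.single u 1)) →
    ∀ s, min (N.pre t s) (N.pre u s) = 0

/-- A sufficiently large ambient type from which the places and transitions of
GR-processes of `N` are drawn. -/
def Amb (N : Net) : Type := Set (N.S ⊕ N.T ⊕ ℕ)

end Net
/-- Raw data of a (Goltz-Reisig) process over a net `N` : an occurrence net
with places `pl` and transitions `tr` (subsets of an ambient type), flow
`Fst` (place → transition) and `Fts` (transition → place), and the process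
mapping `piS`, `piT` into `N`. -/
structure RawProc (N : Net) where
  pl : Set N.Amb
  tr : Set N.Amb
  Fst : N.Amb → N.Amb → ℕ
  Fts : N.Amb → N.Amb → ℕ
  piS : N.Amb → N.S
  piT : N.Amb → N.T

namespace RawProc

variable {N : Net}

/-- The flow relation of the process (places tagged `inl`, transitions `inr`). -/
def rel (P : RawProc N) : (N.Amb ⊕ N.Amb) → (N.Amb ⊕ N.Amb) → Prop
  | Sum.inl x, Sum.inr t => 0 < P.Fst x t
  | Sum.inr t, Sum.inl x => 0 < P.Fts t x
  | _, _ => False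

/-- The causal order `ℱ⁺` of the process. -/
def causal (P : RawProc N) : (N.Amb ⊕ N.Amb) → (N.Amb ⊕ N.Amb) → Prop :=
  Relation.TransGen P.rel

/-- The initially marked places: those with empty preset. -/
def init (P : RawProc N) : Set N.Amb := {x | x ∈ P.pl ∧ ∀ t, P.Fts t x = 0}

/-- The end `P°` of the process: places with empty postset. -/
def ends (P : RawProc N) : Set N.Amb := {x | x ∈ P.pl ∧ ∀ t, P.Fst x t = 0}

/-- The marking `ĤP = π(P°)` of the underlying net reached at the end of `P`. -/
noncomputable def endMark (P : RawProc N) : N.S → ℕ :=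
  fun s => {x | x ∈ P.ends ∧ P.piS x = s}.ncard

/-- A process is finite iff its set of transitions is finite. -/
def FiniteP (P : RawProc N) : Prop := P.tr.Finite

open Classical in
/-- `swap P p q` : exchange the outgoing arcs of the places `p` and `q`. -/
noncomputable def swap (P : RawProc N) (p q : N.Amb) : RawProc N :=
  { P with Fst := fun x t => if x = p then P.Fst q t else if x = q then P.Fst p t else P.Fst x t }

end RawProc

/-- The conditions making a `RawProc` a GR-process of the net `N`. -/
structure IsProc (N : Net) (P : RawProc N) : Prop where
  fst_dom : ∀ x t, 0 < P.Fst x t → x ∈ P.pl ∧ t ∈ P.tr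
  fts_dom : ∀ t x, 0 < P.Fts t x → x ∈ P.pl ∧ t ∈ P.tr
  pre_unique : ∀ x t t', 0 < P.Fts t x → 0 < P.Fts t' x → t = t'
  pre_le_one : ∀ t x, P.Fts t x ≤ 1
  post_unique : ∀ x t t', 0 < P.Fst x t → 0 < P.Fst x t' → t = t'
  post_le_one : ∀ x t, P.Fst x t ≤ 1
  acyclic : ∀ z, ¬ P.causal z z
  finite_past : ∀ u ∈ P.tr, {t : N.Amb | P.causal (Sum.inr t) (Sum.inr u)}.Finite
  init_fin : ∀ s : N.S, {x | x ∈ P.init ∧ P.piS x = s}.Finite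
  init_marking : ∀ s : N.S, N.M0 s = {x | x ∈ P.init ∧ P.piS x = s}.ncard
  pre_fin : ∀ t ∈ P.tr, {x | 0 < P.Fst x t}.Finite
  post_fin : ∀ t ∈ P.tr, {x | 0 < P.Fts t x}.Finite
  pre_match : ∀ t ∈ P.tr, ∀ s : N.S, N.pre (P.piT t) s = ∑ᶠ x ∈ {x | P.piS x = s}, P.Fst x t
  post_match : ∀ t ∈ P.tr, ∀ s : N.S, N.post (P.piT t) s = ∑ᶠ x ∈ {x | P.piS x = s}, P.Fts t x

/-- `ProcPrefix N Q P` : `Q ≤ P`, i.e. `Q` is a prefix of the process `P`. -/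
def ProcPrefix (N : Net) (Q P : RawProc N) : Prop :=
  Q.pl ⊆ P.pl ∧ Q.tr ⊆ P.tr ∧
  (∀ x ∈ Q.pl, ∀ t ∈ Q.tr, Q.Fst x t = P.Fst x t ∧ Q.Fts t x = P.Fts t x) ∧
  (∀ x ∈ Q.pl, Q.piS x = P.piS x) ∧ (∀ t ∈ Q.tr, Q.piT t = P.piT t) ∧
  Q.init = P.init

/-- Isomorphism of processes: a bijection between places and between transitions
respecting the flow, the initial marking and the process mappings. -/
def Iso (N : Net) (P Q : RawProc N) : Prop :=
  ∃ fp ft : N.Amb → N.Amb,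
    Set.BijOn fp P.pl Q.pl ∧ Set.BijOn ft P.tr Q.tr ∧
    (∀ x ∈ P.pl, ∀ t ∈ P.tr,
      Q.Fst (fp x) (ft t) = P.Fst x t ∧ Q.Fts (ft t) (fp x) = P.Fts t x) ∧
    (∀ x ∈ P.pl, (x ∈ P.init ↔ fp x ∈ Q.init)) ∧
    (∀ x ∈ P.pl, Q.piS (fp x) = P.piS x) ∧ (∀ t ∈ P.tr, Q.piT (ft t) = P.piT t)

/-- `p` and `q` are causally unordered places with the same image, so they may be swapped. -/
def Swappable {N : Net} (P : RawProc N) (p q : N.Amb) : Prop :=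
  p ∈ P.pl ∧ q ∈ P.pl ∧ P.piS p = P.piS q ∧
  ¬ P.causal (Sum.inl p) (Sum.inl q) ∧ ¬ P.causal (Sum.inl q) (Sum.inl p)

/-- `P ∼__S Q` : `Q` is obtained from `P` by a single swap. -/
def SwapRel (N : Net) (P Q : RawProc N) : Prop :=
  ∃ p q, Swappable P p q ∧ Q = P.swap p q

/-- `P ≡₁ Q` : one-step swapping equivalence of GR-processes (swap followed by isomorphism). -/
def OneSwap (N : Net) (P Q : RawProc N) : Prop :=
  IsProc N P ∧ IsProc N Q ∧ ∃ p q, Swappable P p q ∧ Iso N (P.swap p q) Q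

/-- `P ≡₁* Q` : the reflexive-transitive closure of one-step swapping equivalence. -/
def SwapEqv (N : Net) : RawProc N → RawProc N → Prop :=
  Relation.ReflTransGen (OneSwap N)

/-- `P —a→ Q` : the process `Q` extends `P` by exactly one transition, labelled `a`. -/
def StepExt (N : Net) (P Q : RawProc N) (a : N.T) : Prop :=
  ProcPrefix N P Q ∧ ∃ t, t ∉ P.tr ∧ Q.tr = insert t P.tr ∧ Q.piT t = a

/-- `P ⊑₁^∞ Q` : every finite prefix `P''` of `P` satisfies
`P'' ≤ P' ≡₁* Q' ≤ Q` for some finite GR-processes `P'`, `Q'`. -/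
def SwapLe (N : Net) (P Q : RawProc N) : Prop :=
  ∀ P'' : RawProc N, IsProc N P'' → P''.FiniteP → ProcPrefix N P'' P →
    ∃ P' Q' : RawProc N, IsProc N P' ∧ P'.FiniteP ∧ IsProc N Q' ∧ Q'.FiniteP ∧
      ProcPrefix N P'' P' ∧ SwapEqv N P' Q' ∧ ProcPrefix N Q' Q

/-- `BDapprox N P` : the smallest set of finite GR-processes containing all finite
prefixes of `P` and closed under `≡₁` and under taking prefixes. -/
inductive BDapprox (N : Net) (P : RawProc N) : RawProc N → Prop
  | base (Q : RawProc N) : IsProc N Q → Q.FiniteP → ProcPrefix N Q P → BDapprox N P Q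
  | swapc (Q R : RawProc N) :
      BDapprox N P R → IsProc N Q → Q.FiniteP → OneSwap N Q R → BDapprox N P Q
  | prefc (Q R : RawProc N) :
      BDapprox N P R → IsProc N Q → Q.FiniteP → ProcPrefix N Q R → BDapprox N P Q


section SwapAux

open Relation

namespace RawProc

variable {N : Net}

lemma swap_pl (B : RawProc N) (p q : N.Amb) : (B.swap p q).pl = B.pl := rfl
lemma swap_tr (B : RawProc N) (p q : N.Amb) : (B.swap p q).tr = B.tr := rfl
lemma swap_Fts (B : RawProc N) (p q : N.Amb) : (B.swap p q).Fts = B.Fts := rfl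
lemma swap_piS (B : RawProc N) (p q : N.Amb) : (B.swap p q).piS = B.piS := rfl
lemma swap_piT (B : RawProc N) (p q : N.Amb) : (B.swap p q).piT = B.piT := rfl

lemma swap_Fst_p (B : RawProc N) (p q : N.Amb) (t : N.Amb) :
    (B.swap p q).Fst p t = B.Fst q t := by
  simp [RawProc.swap]

lemma swap_Fst_q (B : RawProc N) (p q : N.Amb) (t : N.Amb) :
    (B.swap p q).Fst q t = B.Fst p t := by
  by_cases h : q = p
  · subst h; simp [RawProc.swap]
  · simp [RawProc.swap, h]

lemma swap_Fst_other (B : RawProc N) (p q x t : N.Amb) (h1 : x ≠ p) (h2 : x ≠ q) :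
    (B.swap p q).Fst x t = B.Fst x t := by
  simp [RawProc.swap, h1, h2]

lemma swap_swap (B : RawProc N) (p q : N.Amb) : (B.swap p q).swap p q = B := by
  have h : ((B.swap p q).swap p q).Fst = B.Fst := by
    funext x t
    by_cases h1 : x = p
    · subst h1; rw [swap_Fst_p, swap_Fst_q]
    · by_cases h2 : x = q
      · subst h2; rw [swap_Fst_q, swap_Fst_p]
      · rw [swap_Fst_other _ _ _ _ _ h1 h2, swap_Fst_other _ _ _ _ _ h1 h2]
  calc (B.swap p q).swap p q
      = RawProc.mk B.pl B.tr (((B.swap p q).swap p q).Fst) B.Fts B.piS B.piT := rfl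
    _ = B := by rw [h]

open Classical in
/-- The involution on nodes exchanging the two places `p` and `q`. -/
noncomputable def sigma (p q : N.Amb) : (N.Amb ⊕ N.Amb) → (N.Amb ⊕ N.Amb) :=
  fun z => if z = Sum.inl p then Sum.inl q else if z = Sum.inl q then Sum.inl p else z

lemma sigma_inl_p (p q : N.Amb) : sigma (N := N) p q (Sum.inl p) = Sum.inl q := by
  simp [sigma]

lemma sigma_inl_q (p q : N.Amb) : sigma (N := N) p q (Sum.inl q) = Sum.inl p := by
  by_cases h : q = p
  · subst h; simp [sigma]
  · simp [sigma, h]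

lemma sigma_inr (p q : N.Amb) (t : N.Amb) : sigma (N := N) p q (Sum.inr t) = Sum.inr t := by
  simp [sigma]

lemma swap_rel_imp (B : RawProc N) (p q : N.Amb) :
    ∀ {z w}, (B.swap p q).rel z w → B.rel (sigma p q z) w := by
  intro z w h
  match z, w with
  | Sum.inl x, Sum.inl y => exact (h : False).elim
  | Sum.inr t, Sum.inr u => exact (h : False).elim
  | Sum.inr t, Sum.inl x =>
    rw [sigma_inr]
    exact h
  | Sum.inl x, Sum.inr t =>
    have h' : 0 < (B.swap p q).Fst x t := h
    by_cases h1 : x = p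
    · subst h1
      rw [swap_Fst_p] at h'
      rw [sigma_inl_p]
      exact h'
    · by_cases h2 : x = q
      · subst h2
        rw [swap_Fst_q] at h'
        rw [sigma_inl_q]
        exact h'
      · rw [swap_Fst_other _ _ _ _ _ h1 h2] at h'
        have : sigma (N := N) p q (Sum.inl x) = Sum.inl x := by simp [sigma, h1, h2]
        rw [this]
        exact h'

/-- Decomposition of causal chains of the swapped process into causal chains of the
original process, with possible break points at `p` and `q`. -/
lemma swapD (B : RawProc N) (p q : N.Amb)
    (hac : ∀ z, ¬ B.causal z z)
    (hpq : ¬ B.causal (Sum.inl p) (Sum.inl q))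
    (hqp : ¬ B.causal (Sum.inl q) (Sum.inl p)) :
    ∀ z w, (B.swap p q).causal z w →
      B.causal (sigma p q z) w ∨
      (B.causal (sigma p q z) (Sum.inl p) ∧ B.causal (Sum.inl q) w) ∨
      (B.causal (sigma p q z) (Sum.inl q) ∧ B.causal (Sum.inl p) w) := by
  intro z w h
  have h' : Relation.TransGen (B.swap p q).rel z w := h
  clear h
  induction h' with
  | single h => exact Or.inl (TransGen.single (swap_rel_imp B p q h))
  | @tail y w' h1 h2 ih =>
    have harc := swap_rel_imp B p q h2
    by_cases hyp : y = Sum.inl p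
    · subst hyp
      rw [sigma_inl_p] at harc
      rcases ih with h | ⟨ha, hb⟩ | ⟨ha, hb⟩
      · exact Or.inr (Or.inl ⟨h, TransGen.single harc⟩)
      · exact absurd hb hqp
      · exact absurd hb (hac _)
    · by_cases hyq : y = Sum.inl q
      · subst hyq
        rw [sigma_inl_q] at harc
        rcases ih with h | ⟨ha, hb⟩ | ⟨ha, hb⟩
        · exact Or.inr (Or.inr ⟨h, TransGen.single harc⟩)
        · exact absurd hb (hac _)
        · exact absurd hb hpq
      · have hσ : sigma (N := N) p q y = y := by simp [sigma, hyp, hyq]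
        rw [hσ] at harc
        rcases ih with h | ⟨ha, hb⟩ | ⟨ha, hb⟩
        · exact Or.inl (h.tail harc)
        · exact Or.inr (Or.inl ⟨ha, hb.tail harc⟩)
        · exact Or.inr (Or.inr ⟨ha, hb.tail harc⟩)

lemma swap_acyclic (B : RawProc N) (p q : N.Amb)
    (hac : ∀ z, ¬ B.causal z z)
    (hpq : ¬ B.causal (Sum.inl p) (Sum.inl q))
    (hqp : ¬ B.causal (Sum.inl q) (Sum.inl p)) :
    ∀ z, ¬ (B.swap p q).causal z z := by
  intro z h
  rcases swapD B p q hac hpq hqp z z h with h | ⟨ha, hb⟩ | ⟨ha, hb⟩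
  · by_cases h1 : z = Sum.inl p
    · subst h1; rw [sigma_inl_p] at h; exact hqp h
    · by_cases h2 : z = Sum.inl q
      · subst h2; rw [sigma_inl_q] at h; exact hpq h
      · have hσ : sigma (N := N) p q z = z := by simp [sigma, h1, h2]
        rw [hσ] at h; exact hac _ h
  · by_cases h1 : z = Sum.inl p
    · subst h1; exact hqp hb
    · by_cases h2 : z = Sum.inl q
      · subst h2; rw [sigma_inl_q] at ha; exact hac _ ha
      · have hσ : sigma (N := N) p q z = z := by simp [sigma, h1, h2]
        rw [hσ] at ha; exact hqp (hb.trans ha)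
  · by_cases h1 : z = Sum.inl q
    · subst h1; exact hpq hb
    · by_cases h2 : z = Sum.inl p
      · subst h2; rw [sigma_inl_p] at ha; exact hac _ ha
      · have hσ : sigma (N := N) p q z = z := by simp [sigma, h2, h1]
        rw [hσ] at ha; exact hpq (hb.trans ha)

lemma swap_unord (B : RawProc N) (p q : N.Amb)
    (hac : ∀ z, ¬ B.causal z z)
    (hpq : ¬ B.causal (Sum.inl p) (Sum.inl q))
    (hqp : ¬ B.causal (Sum.inl q) (Sum.inl p)) :
    ¬ (B.swap p q).causal (Sum.inl p) (Sum.inl q) ∧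
    ¬ (B.swap p q).causal (Sum.inl q) (Sum.inl p) := by
  constructor
  · intro h
    rcases swapD B p q hac hpq hqp _ _ h with h | ⟨ha, hb⟩ | ⟨ha, hb⟩
    · rw [sigma_inl_p] at h; exact hac _ h
    · rw [sigma_inl_p] at ha; exact hqp ha
    · rw [sigma_inl_p] at ha; exact hac _ ha
  · intro h
    rcases swapD B p q hac hpq hqp _ _ h with h | ⟨ha, hb⟩ | ⟨ha, hb⟩
    · rw [sigma_inl_q] at h; exact hac _ h
    · rw [sigma_inl_q] at ha; exact hac _ ha
    · rw [sigma_inl_q] at ha; exact hpq ha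

/-- Causal chains of `B` ending inside a prefix `A` lie entirely in `A`. -/
lemma prefix_causal (A B : RawProc N)
    (HL1 : ∀ x ∈ A.pl, ∀ t, 0 < B.Fts t x → t ∈ A.tr ∧ 0 < A.Fts t x)
    (HL2 : ∀ t ∈ A.tr, ∀ x, 0 < B.Fst x t → x ∈ A.pl ∧ 0 < A.Fst x t) :
    ∀ z w, B.causal z w → Sum.elim (· ∈ A.pl) (· ∈ A.tr) w →
      A.causal z w ∧ Sum.elim (· ∈ A.pl) (· ∈ A.tr) z := by
  have harc : ∀ z w, B.rel z w → Sum.elim (· ∈ A.pl) (· ∈ A.tr) w →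
      A.rel z w ∧ Sum.elim (· ∈ A.pl) (· ∈ A.tr) z := by
    intro z w h hw
    match z, w with
    | Sum.inl x, Sum.inl y => exact (h : False).elim
    | Sum.inr t, Sum.inr u => exact (h : False).elim
    | Sum.inl x, Sum.inr t =>
      obtain ⟨h1, h2⟩ := HL2 t hw x h
      exact ⟨h2, h1⟩
    | Sum.inr t, Sum.inl x =>
      obtain ⟨h1, h2⟩ := HL1 x hw t h
      exact ⟨h2, h1⟩
  intro z w h
  have h' : Relation.TransGen B.rel z w := h
  clear h
  induction h' with
  | single h =>
    intro hw
    obtain ⟨h1, h2⟩ := harc _ _ h hw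
    exact ⟨TransGen.single h1, h2⟩
  | tail h1 h2 ih =>
    intro hw
    obtain ⟨h3, h4⟩ := harc _ _ h2 hw
    obtain ⟨h5, h6⟩ := ih h4
    exact ⟨h5.tail h3, h6⟩

lemma prefix_L1 {A B : RawProc N} (hA : IsProc N A) (hB : IsProc N B)
    (h : ProcPrefix N A B) :
    ∀ x ∈ A.pl, ∀ t, 0 < B.Fts t x → t ∈ A.tr ∧ 0 < A.Fts t x := by
  intro x hx t ht
  by_cases hinit : ∀ u, A.Fts u x = 0
  · have hxi : x ∈ B.init := h.2.2.2.2.2 ▸ (⟨hx, hinit⟩ : x ∈ A.init)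
    exact absurd (hxi.2 t) (by omega)
  · push_neg at hinit
    obtain ⟨u, hu⟩ := hinit
    have hu' : 0 < A.Fts u x := Nat.pos_of_ne_zero hu
    have hutr : u ∈ A.tr := (hA.fts_dom u x hu').2
    have hBu : 0 < B.Fts u x := by
      rw [← (h.2.2.1 x hx u hutr).2]; exact hu'
    have := hB.pre_unique x t u ht hBu
    subst this
    exact ⟨hutr, hu'⟩

lemma prefix_L2 {A B : RawProc N} (hA : IsProc N A) (hB : IsProc N B)
    (h : ProcPrefix N A B) :
    ∀ t ∈ A.tr, ∀ x, 0 < B.Fst x t → x ∈ A.pl ∧ 0 < A.Fst x t := by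
  classical
  intro t ht x hx
  by_cases hxpl : x ∈ A.pl
  · exact ⟨hxpl, by rw [(h.2.2.1 x hxpl t ht).1]; exact hx⟩
  · exfalso
    set s := B.piS x with hs
    have htB : t ∈ B.tr := h.2.1 ht
    have hsuppB : (Function.support fun y => B.Fst y t) = {y | 0 < B.Fst y t} := by
      ext y; simp [Function.support, Nat.pos_iff_ne_zero]
    have hsuppA : (Function.support fun y => A.Fst y t) = {y | 0 < A.Fst y t} := by
      ext y; simp [Function.support, Nat.pos_iff_ne_zero]
    have hfB : ({y | B.piS y = s} ∩ Function.support fun y => B.Fst y t).Finite := by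
      rw [hsuppB]; exact (hB.pre_fin t htB).subset Set.inter_subset_right
    have hfA : ({y | A.piS y = s} ∩ Function.support fun y => A.Fst y t).Finite := by
      rw [hsuppA]; exact (hA.pre_fin t ht).subset Set.inter_subset_right
    have e1 := hB.pre_match t htB s
    have e2 := hA.pre_match t ht s
    rw [h.2.2.2.2.1 t ht] at e2
    rw [finsum_mem_eq_sum _ hfB] at e1
    rw [finsum_mem_eq_sum _ hfA] at e2
    have hsum : ∑ y ∈ hfA.toFinset, A.Fst y t = ∑ y ∈ hfB.toFinset, B.Fst y t := by
      rw [← e1, ← e2]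
    -- every element of hfA.toFinset lies in A.pl and also in hfB.toFinset
    have hmem : ∀ y ∈ hfA.toFinset, y ∈ A.pl ∧ y ∈ hfB.toFinset ∧ A.Fst y t = B.Fst y t := by
      intro y hy
      rw [Set.Finite.mem_toFinset] at hy
      obtain ⟨hy1, hy2⟩ := hy
      rw [Function.mem_support] at hy2
      have hypos : 0 < A.Fst y t := Nat.pos_of_ne_zero hy2
      have hypl : y ∈ A.pl := (hA.fst_dom y t hypos).1
      have heq : A.Fst y t = B.Fst y t := (h.2.2.1 y hypl t ht).1
      refine ⟨hypl, ?_, heq⟩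
      rw [Set.Finite.mem_toFinset]
      refine ⟨?_, ?_⟩
      · show B.piS y = s
        rw [← h.2.2.2.1 y hypl]; exact hy1
      · rw [Function.mem_support, ← heq]; exact hy2
    have hAB : hfA.toFinset ⊆ hfB.toFinset := fun y hy => (hmem y hy).2.1
    have hxB : x ∈ hfB.toFinset := by
      rw [Set.Finite.mem_toFinset]
      exact ⟨rfl, by rw [Function.mem_support]; omega⟩
    have hxA : x ∉ hfA.toFinset := by
      intro hc; exact hxpl (hmem x hc).1
    have hle : ∑ y ∈ insert x hfA.toFinset, B.Fst y t ≤ ∑ y ∈ hfB.toFinset, B.Fst y t :=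
      Finset.sum_le_sum_of_subset (Finset.insert_subset hxB hAB)
    rw [Finset.sum_insert hxA] at hle
    have hAA : ∑ y ∈ hfA.toFinset, A.Fst y t = ∑ y ∈ hfA.toFinset, B.Fst y t :=
      Finset.sum_congr rfl fun y hy => (hmem y hy).2.2
    omega

lemma past_place_finite (B : RawProc N) (hB : IsProc N B) (x : N.Amb) :
    {t | B.causal (Sum.inr t) (Sum.inl x)}.Finite := by
  have hV : {v : N.Amb | 0 < B.Fts v x}.Finite := by
    apply Set.Subsingleton.finite
    intro a ha b hb
    exact hB.pre_unique x a b ha hb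
  have hsub : {t | B.causal (Sum.inr t) (Sum.inl x)} ⊆
      ⋃ v ∈ {v : N.Amb | 0 < B.Fts v x},
        insert v {t | B.causal (Sum.inr t) (Sum.inr v)} := by
    intro t ht
    obtain ⟨y, hy1, hy2⟩ := (Relation.TransGen.tail'_iff).1 ht
    match y with
    | Sum.inl _ => exact (hy2 : False).elim
    | Sum.inr v =>
      have hv : 0 < B.Fts v x := hy2
      rcases Relation.reflTransGen_iff_eq_or_transGen.1 hy1 with heq | htg
      · refine Set.mem_biUnion hv ?_
        rw [Sum.inr.injEq] at heq
        exact Set.mem_insert_iff.2 (Or.inl heq.symm)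
      · exact Set.mem_biUnion hv (Set.mem_insert_iff.2 (Or.inr htg))
  refine Set.Finite.subset (Set.Finite.biUnion hV ?_) hsub
  intro v hv
  exact (hB.finite_past v (hB.fts_dom v x hv).2).insert v

lemma swap_isProc (B : RawProc N) (hB : IsProc N B) {p q : N.Amb}
    (hsw : Swappable B p q) : IsProc N (B.swap p q) := by
  classical
  obtain ⟨hp, hq, hpiS, hpq, hqp⟩ := hsw
  refine
    { fts_dom := hB.fts_dom
      pre_unique := hB.pre_unique
      pre_le_one := hB.pre_le_one
      init_fin := hB.init_fin
      init_marking := hB.init_marking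
      post_fin := hB.post_fin
      post_match := hB.post_match
      acyclic := swap_acyclic B p q hB.acyclic hpq hqp
      fst_dom := ?_
      post_unique := ?_
      post_le_one := ?_
      finite_past := ?_
      pre_fin := ?_
      pre_match := ?_ }
  · -- fst_dom
    intro x t h
    by_cases h1 : x = p
    · subst h1; rw [swap_Fst_p] at h; exact ⟨hp, (hB.fst_dom q t h).2⟩
    · by_cases h2 : x = q
      · subst h2; rw [swap_Fst_q] at h; exact ⟨hq, (hB.fst_dom p t h).2⟩
      · rw [swap_Fst_other _ _ _ _ _ h1 h2] at h; exact hB.fst_dom x t h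
  · -- post_unique
    intro x t t' h h'
    by_cases h1 : x = p
    · subst h1; rw [swap_Fst_p] at h h'; exact hB.post_unique q t t' h h'
    · by_cases h2 : x = q
      · subst h2; rw [swap_Fst_q] at h h'; exact hB.post_unique p t t' h h'
      · rw [swap_Fst_other _ _ _ _ _ h1 h2] at h h'; exact hB.post_unique x t t' h h'
  · -- post_le_one
    intro x t
    by_cases h1 : x = p
    · subst h1; rw [swap_Fst_p]; exact hB.post_le_one q t
    · by_cases h2 : x = q
      · subst h2; rw [swap_Fst_q]; exact hB.post_le_one p t
      · rw [swap_Fst_other _ _ _ _ _ h1 h2]; exact hB.post_le_one x t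
  · -- finite_past
    intro u hu
    have hsub : {t : N.Amb | (B.swap p q).causal (Sum.inr t) (Sum.inr u)} ⊆
        {t | B.causal (Sum.inr t) (Sum.inr u)} ∪
        ({t | B.causal (Sum.inr t) (Sum.inl p)} ∪
         {t | B.causal (Sum.inr t) (Sum.inl q)}) := by
      intro t ht
      rcases swapD B p q hB.acyclic hpq hqp _ _ ht with h | ⟨ha, _⟩ | ⟨ha, _⟩
      · rw [sigma_inr] at h; exact Or.inl h
      · rw [sigma_inr] at ha; exact Or.inr (Or.inl ha)
      · rw [sigma_inr] at ha; exact Or.inr (Or.inr ha)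
    exact Set.Finite.subset
      ((hB.finite_past u hu).union
        ((past_place_finite B hB p).union (past_place_finite B hB q))) hsub
  · -- pre_fin
    intro t ht
    have hsub : {x | 0 < (B.swap p q).Fst x t} ⊆
        insert p (insert q {x | 0 < B.Fst x t}) := by
      intro x hx
      by_cases h1 : x = p
      · exact Or.inl h1
      · by_cases h2 : x = q
        · exact Or.inr (Or.inl h2)
        · rw [Set.mem_setOf_eq, swap_Fst_other _ _ _ _ _ h1 h2] at hx
          exact Or.inr (Or.inr hx)
    exact Set.Finite.subset (((hB.pre_fin t ht).insert q).insert p) hsub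
  · -- pre_match
    intro t ht s
    have e := hB.pre_match t ht s
    show N.pre (B.piT t) s = ∑ᶠ x ∈ {x | B.piS x = s}, (B.swap p q).Fst x t
    rw [e]
    set σp : N.Amb → N.Amb := fun x => if x = p then q else if x = q then p else x with hσp
    have hinv : ∀ x, σp (σp x) = x := by
      intro x
      by_cases h1 : x = p
      · by_cases h2 : q = p
        · simp [hσp, h1, h2]
        · simp [hσp, h1, h2]
      · by_cases h2 : x = q
        · simp [hσp, h1, h2]
        · simp [hσp, h1, h2]
    have hmaps : Set.MapsTo σp {x | B.piS x = s} {x | B.piS x = s} := by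
      intro x hx
      have hps : B.piS (σp x) = B.piS x := by
        by_cases h1 : x = p
        · rw [h1, show σp p = q from by simp [hσp]]; exact hpiS.symm
        · by_cases h2 : x = q
          · have hqp' : ¬ q = p := fun hc => h1 (h2.trans hc)
            rw [h2, show σp q = p from by simp [hσp, hqp']]; exact hpiS
          · rw [show σp x = x from by simp [hσp, h1, h2]]
      rw [Set.mem_setOf_eq, hps]; exact hx
    have hbij : Set.BijOn σp {x | B.piS x = s} {x | B.piS x = s} := by
      refine ⟨hmaps, ?_, ?_⟩
      · intro a _ b _ hab
        rw [← hinv a, hab, hinv b]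
      · intro x hx
        exact ⟨σp x, hmaps hx, hinv x⟩
    refine finsum_mem_eq_of_bijOn σp hbij ?_
    intro x _
    by_cases h1 : x = p
    · rw [h1, show σp p = q from by simp [hσp], swap_Fst_q]
    · by_cases h2 : x = q
      · have hqp' : ¬ q = p := fun hc => h1 (h2.trans hc)
        rw [h2, show σp q = p from by simp [hσp, hqp'], swap_Fst_p]
      · rw [show σp x = x from by simp [hσp, h1, h2], swap_Fst_other _ _ _ _ _ h1 h2]

end RawProc

end SwapAux

/-- Swapping can be postponed past extension: if `P ∼_S P' ≤ Q`, then there is a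
GR-process `Q'` with `P ≤ Q' ∼_S Q`. -/
theorem swap_past_extension (N : Net) (P P' Q : RawProc N)
    (hP : IsProc N P) (hP' : IsProc N P') (hQ : IsProc N Q)
    (h1 : SwapRel N P P') (h2 : ProcPrefix N P' Q) :
    ∃ Q', IsProc N Q' ∧ ProcPrefix N P Q' ∧ SwapRel N Q' Q := by
  classical
  obtain ⟨p, q, hsw, rfl⟩ := h1
  obtain ⟨hp, hq, hpiS, hpqP, hqpP⟩ := hsw
  -- closure lemmas for the prefix P.swap p q ≤ Q
  have HL1 := RawProc.prefix_L1 hP' hQ h2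
  have HL2 := RawProc.prefix_L2 hP' hQ h2
  have hcl := RawProc.prefix_causal (P.swap p q) Q HL1 HL2
  have hU := RawProc.swap_unord P p q hP.acyclic hpqP hqpP
  -- p and q are causally unordered in Q
  have hpqQ : ¬ Q.causal (Sum.inl p) (Sum.inl q) := by
    intro h
    have hA : (P.swap p q).causal (Sum.inl p) (Sum.inl q) :=
      (hcl _ _ h (show q ∈ (P.swap p q).pl from hq)).1
    exact hU.1 hA
  have hqpQ : ¬ Q.causal (Sum.inl q) (Sum.inl p) := by
    intro h
    have hA : (P.swap p q).causal (Sum.inl q) (Sum.inl p) :=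
      (hcl _ _ h (show p ∈ (P.swap p q).pl from hp)).1
    exact hU.2 hA
  have hpQ : p ∈ Q.pl := h2.1 hp
  have hqQ : q ∈ Q.pl := h2.1 hq
  have hpiSQ : Q.piS p = Q.piS q := by
    rw [← h2.2.2.2.1 p hp, ← h2.2.2.2.1 q hq]
    exact hpiS
  have hswQ : Swappable Q p q := ⟨hpQ, hqQ, hpiSQ, hpqQ, hqpQ⟩
  refine ⟨Q.swap p q, RawProc.swap_isProc Q hQ hswQ, ?_, ?_⟩
  · -- ProcPrefix P (Q.swap p q)
    refine ⟨h2.1, h2.2.1, ?_, h2.2.2.2.1, h2.2.2.2.2.1, h2.2.2.2.2.2⟩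
    intro x hx t ht
    constructor
    · by_cases hxp : x = p
      · rw [hxp, RawProc.swap_Fst_p, ← (h2.2.2.1 q hq t ht).1, RawProc.swap_Fst_q]
      · by_cases hxq : x = q
        · rw [hxq, RawProc.swap_Fst_q, ← (h2.2.2.1 p hp t ht).1, RawProc.swap_Fst_p]
        · rw [RawProc.swap_Fst_other _ _ _ _ _ hxp hxq,
            ← (h2.2.2.1 x hx t ht).1, RawProc.swap_Fst_other _ _ _ _ _ hxp hxq]
    · exact (h2.2.2.1 x hx t ht).2
  · -- SwapRel (Q.swap p q) Q
    have hU' := RawProc.swap_unord Q p q hQ.acyclic hpqQ hqpQ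
    exact ⟨p, q, ⟨hpQ, hqQ, hpiSQ, hU'.1, hU'.2⟩, (RawProc.swap_swap Q p q).symm⟩
end

section
/- Swapping-equivalent prefixes can be rearranged: if P ≡₁* P' ≤ Q for GR-processes of a net, then there exists Q' with P ≤ Q' ≡₁* Q. -/
section Aux
open scoped Classical
open Function Set

variable {N : Net}

instance : Nonempty N.Amb := ⟨(∅ : Set _)⟩

/-! ### finsum helpers -/

lemma finsum_mem_pos_exists {f : N.Amb → ℕ} {s : Set N.Amb}
    (h : 0 < ∑ᶠ x ∈ s, f x) : ∃ x ∈ s, 0 < f x := by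
  by_contra hc
  push_neg at hc
  have : ∑ᶠ x ∈ s, f x = 0 := finsum_mem_of_eqOn_zero fun x hx => Nat.le_zero.mp (hc x hx)
  omega

lemma finsum_mem_support_congr {f : N.Amb → ℕ} {s t : Set N.Amb}
    (h : s ∩ support f = t ∩ support f) : ∑ᶠ x ∈ s, f x = ∑ᶠ x ∈ t, f x := by
  rw [← finsum_mem_inter_support f s, ← finsum_mem_inter_support f t, h]

lemma finsum_mem_nat_eqOn {f g : N.Amb → ℕ} {s : Set N.Amb}
    (hg : (support g).Finite) (hfg : support f ⊆ support g)
    (hle : ∀ x ∈ s, f x ≤ g x)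
    (hsum : ∑ᶠ x ∈ s, f x = ∑ᶠ x ∈ s, g x) : ∀ x ∈ s, f x = g x := by
  have hf : (support f).Finite := hg.subset hfg
  set s' : Set N.Amb := s ∩ support g with hs'
  have hs'fin : s'.Finite := hg.inter_of_right s
  have hsf : ∑ᶠ x ∈ s, f x = ∑ᶠ x ∈ s', f x := by
    refine finsum_mem_support_congr ?_
    ext x; simp only [mem_inter_iff, hs', mem_support]
    constructor
    · rintro ⟨hxs, hxf⟩; exact ⟨⟨hxs, hfg hxf⟩, hxf⟩
    · rintro ⟨⟨hxs, _⟩, hxf⟩; exact ⟨hxs, hxf⟩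
  have hsg : ∑ᶠ x ∈ s, g x = ∑ᶠ x ∈ s', g x := by
    refine finsum_mem_support_congr ?_
    ext x; simp only [mem_inter_iff, hs', mem_support]
    tauto
  intro x hx
  by_contra hne
  have hlt : f x < g x := lt_of_le_of_ne (hle x hx) hne
  have hxs' : x ∈ s' := ⟨hx, by simp only [mem_support]; omega⟩
  have h1 : ∑ x ∈ hs'fin.toFinset, f x < ∑ x ∈ hs'fin.toFinset, g x := by
    refine Finset.sum_lt_sum (fun i hi => ?_) ⟨x, hs'fin.mem_toFinset.mpr hxs', hlt⟩
    exact hle i (hs'fin.mem_toFinset.mp hi).1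
  rw [← finsum_mem_eq_finite_toFinset_sum f hs'fin, ← finsum_mem_eq_finite_toFinset_sum g hs'fin,
    ← hsf, ← hsg, hsum] at h1
  omega

/-! ### swap basics -/

lemma rawProc_ext {P Q : RawProc N} (hpl : P.pl = Q.pl) (htr : P.tr = Q.tr)
    (hFst : P.Fst = Q.Fst) (hFts : P.Fts = Q.Fts) (hpiS : P.piS = Q.piS)
    (hpiT : P.piT = Q.piT) : P = Q := by
  cases P; cases Q; dsimp at *; subst hpl htr hFst hFts hpiS hpiT; rfl

lemma swap_pl (P : RawProc N) (p q : N.Amb) : (P.swap p q).pl = P.pl := rfl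
lemma swap_tr (P : RawProc N) (p q : N.Amb) : (P.swap p q).tr = P.tr := rfl
lemma swap_Fts (P : RawProc N) (p q : N.Amb) : (P.swap p q).Fts = P.Fts := rfl
lemma swap_piS (P : RawProc N) (p q : N.Amb) : (P.swap p q).piS = P.piS := rfl
lemma swap_piT (P : RawProc N) (p q : N.Amb) : (P.swap p q).piT = P.piT := rfl
lemma swap_init (P : RawProc N) (p q : N.Amb) : (P.swap p q).init = P.init := rfl

lemma swap_Fst (P : RawProc N) (p q x t : N.Amb) :
    (P.swap p q).Fst x t = if x = p then P.Fst q t else if x = q then P.Fst p t else P.Fst x t := by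
  simp only [RawProc.swap]

lemma swap_swap (P : RawProc N) (p q : N.Amb) : (P.swap p q).swap p q = P := by
  have h : ((P.swap p q).swap p q).Fst = P.Fst := by
    funext x t
    simp only [RawProc.swap]
    split_ifs <;> simp_all
  exact rawProc_ext rfl rfl h rfl rfl rfl

lemma swap_comm (P : RawProc N) (p q : N.Amb) : P.swap p q = P.swap q p := by
  have h : (P.swap p q).Fst = (P.swap q p).Fst := by
    funext x t
    simp only [RawProc.swap]
    split_ifs <;> simp_all
  exact rawProc_ext rfl rfl h rfl rfl rfl

/-- The permutation of the node type exchanging the places `p` and `q`. -/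
noncomputable def sigmaSwap (p q : N.Amb) : (N.Amb ⊕ N.Amb) → (N.Amb ⊕ N.Amb) :=
  fun z => if z = Sum.inl p then Sum.inl q else if z = Sum.inl q then Sum.inl p else z

lemma sigma_inl_p (p q : N.Amb) : sigmaSwap p q (Sum.inl p) = Sum.inl q := by
  simp [sigmaSwap]

lemma sigma_inl_q (p q : N.Amb) : sigmaSwap p q (Sum.inl q) = Sum.inl p := by
  by_cases h : q = p
  · subst h; simp [sigmaSwap]
  · simp [sigmaSwap, h]

lemma sigma_inr (p q t : N.Amb) : sigmaSwap p q (Sum.inr t) = Sum.inr t := by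
  simp [sigmaSwap]

lemma sigma_other (p q : N.Amb) {z : N.Amb ⊕ N.Amb} (h1 : z ≠ Sum.inl p) (h2 : z ≠ Sum.inl q) :
    sigmaSwap p q z = z := by
  simp [sigmaSwap, h1, h2]

lemma swap_rel (P : RawProc N) (p q : N.Amb) (z z' : N.Amb ⊕ N.Amb) :
    (P.swap p q).rel z z' ↔ P.rel (sigmaSwap p q z) z' := by
  cases z with
  | inl x =>
    by_cases hxp : x = p
    · subst hxp
      rw [sigma_inl_p]
      cases z' with
      | inl y => simp [RawProc.rel]
      | inr t => simp [RawProc.rel, RawProc.swap]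
    · by_cases hxq : x = q
      · subst hxq
        rw [sigma_inl_q]
        cases z' with
        | inl y => simp [RawProc.rel]
        | inr t => simp [RawProc.rel, RawProc.swap, hxp]
      · rw [sigma_other p q (by simp [hxp]) (by simp [hxq])]
        cases z' with
        | inl y => simp [RawProc.rel]
        | inr t => simp [RawProc.rel, RawProc.swap, hxp, hxq]
  | inr t =>
    rw [sigma_inr]
    cases z' with
    | inl y => simp only [RawProc.rel, swap_Fts]
    | inr u => simp [RawProc.rel]

end Aux
section AuxB
open scoped Classical
open Function Set

variable {N : Net}

/-- Master invariant: any causal chain of the swapped process projects to causal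
information in the original process. -/
lemma swap_causal_cases {P : RawProc N} (hP : IsProc N P) {p q : N.Amb}
    (hpq : ¬ P.causal (Sum.inl p) (Sum.inl q)) (hqp : ¬ P.causal (Sum.inl q) (Sum.inl p))
    {a b : N.Amb ⊕ N.Amb} (h : (P.swap p q).causal a b) :
    P.causal (sigmaSwap p q a) b
    ∨ ((P.causal (sigmaSwap p q a) (Sum.inl p) ∨ sigmaSwap p q a = Sum.inl p) ∧
        P.causal (Sum.inl q) b)
    ∨ ((P.causal (sigmaSwap p q a) (Sum.inl q) ∨ sigmaSwap p q a = Sum.inl q) ∧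
        P.causal (Sum.inl p) b) := by
  induction h with
  | single hrel => exact Or.inl (Relation.TransGen.single ((swap_rel P p q _ _).mp hrel))
  | @tail c b hcl hrel ih =>
    have hrel' := (swap_rel P p q _ _).mp hrel
    by_cases hcp : c = Sum.inl p
    · subst hcp
      rw [sigma_inl_p] at hrel'
      rcases ih with h1 | ⟨h1, h2⟩ | ⟨h1, h2⟩
      · exact Or.inr (Or.inl ⟨Or.inl h1, Relation.TransGen.single hrel'⟩)
      · exact absurd h2 hqp
      · exact absurd h2 (hP.acyclic _)
    · by_cases hcq : c = Sum.inl q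
      · subst hcq
        rw [sigma_inl_q] at hrel'
        rcases ih with h1 | ⟨h1, h2⟩ | ⟨h1, h2⟩
        · exact Or.inr (Or.inr ⟨Or.inl h1, Relation.TransGen.single hrel'⟩)
        · exact absurd h2 (hP.acyclic _)
        · exact absurd h2 hpq
      · rw [sigma_other p q hcp hcq] at hrel'
        rcases ih with h1 | ⟨h1, h2⟩ | ⟨h1, h2⟩
        · exact Or.inl (h1.tail hrel')
        · exact Or.inr (Or.inl ⟨h1, h2.tail hrel'⟩)
        · exact Or.inr (Or.inr ⟨h1, h2.tail hrel'⟩)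

lemma swap_acyclic {P : RawProc N} (hP : IsProc N P) {p q : N.Amb}
    (hsw : Swappable P p q) : ∀ z, ¬ (P.swap p q).causal z z := by
  obtain ⟨hp, hq, hpi, hpq, hqp⟩ := hsw
  intro a hca
  rcases swap_causal_cases hP hpq hqp hca with h1 | ⟨h1, h2⟩ | ⟨h1, h2⟩
  · by_cases hap : a = Sum.inl p
    · subst hap; rw [sigma_inl_p] at h1; exact hqp h1
    · by_cases haq : a = Sum.inl q
      · subst haq; rw [sigma_inl_q] at h1; exact hpq h1
      · rw [sigma_other p q hap haq] at h1; exact hP.acyclic _ h1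
  · by_cases hap : a = Sum.inl p
    · subst hap; exact hqp h2
    · by_cases haq : a = Sum.inl q
      · subst haq; exact hP.acyclic _ h2
      · rw [sigma_other p q hap haq] at h1
        rcases h1 with h1 | h1
        · exact hqp (h2.trans h1)
        · exact hap h1
  · by_cases hap : a = Sum.inl p
    · subst hap; exact hP.acyclic _ h2
    · by_cases haq : a = Sum.inl q
      · subst haq; exact hpq h2
      · rw [sigma_other p q hap haq] at h1
        rcases h1 with h1 | h1
        · exact hpq (h2.trans h1)
        · exact haq h1

lemma swap_not_causal_pq {P : RawProc N} (hP : IsProc N P) {p q : N.Amb}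
    (hsw : Swappable P p q) :
    ¬ (P.swap p q).causal (Sum.inl p) (Sum.inl q) ∧
    ¬ (P.swap p q).causal (Sum.inl q) (Sum.inl p) := by
  obtain ⟨hp, hq, hpi, hpq, hqp⟩ := hsw
  constructor
  · intro hc
    rcases swap_causal_cases hP hpq hqp hc with h1 | ⟨h1, h2⟩ | ⟨h1, h2⟩
    · rw [sigma_inl_p] at h1; exact hP.acyclic _ h1
    · exact hP.acyclic _ h2
    · exact hpq h2
  · intro hc
    rcases swap_causal_cases hP hpq hqp hc with h1 | ⟨h1, h2⟩ | ⟨h1, h2⟩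
    · rw [sigma_inl_q] at h1; exact hP.acyclic _ h1
    · exact hqp h2
    · exact hP.acyclic _ h2

lemma swappable_swap {P : RawProc N} (hP : IsProc N P) {p q : N.Amb}
    (hsw : Swappable P p q) : Swappable (P.swap p q) p q := by
  obtain h := swap_not_causal_pq hP hsw
  exact ⟨hsw.1, hsw.2.1, hsw.2.2.1, h.1, h.2⟩

/-- The set of transitions causally before a place of a process is finite. -/
lemma place_past_finite {P : RawProc N} (hP : IsProc N P) (x : N.Amb) :
    {t : N.Amb | P.causal (Sum.inr t) (Sum.inl x)}.Finite := by
  by_cases hex : ∃ t₁, 0 < P.Fts t₁ x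
  · obtain ⟨t₁, ht₁⟩ := hex
    have ht₁tr : t₁ ∈ P.tr := (hP.fts_dom t₁ x ht₁).2
    have hsub : {t : N.Amb | P.causal (Sum.inr t) (Sum.inl x)} ⊆
        insert t₁ {t : N.Amb | P.causal (Sum.inr t) (Sum.inr t₁)} := by
      intro t ht
      obtain ⟨c, hc1, hc2⟩ := (Relation.TransGen.tail'_iff).mp ht
      cases c with
      | inl y => exact absurd hc2 (by simp [RawProc.rel])
      | inr t₂ =>
        have ht₂ : 0 < P.Fts t₂ x := hc2
        have : t₂ = t₁ := hP.pre_unique x t₂ t₁ ht₂ ht₁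
        subst this
        rcases (Relation.reflTransGen_iff_eq_or_transGen.mp hc1) with h | h
        · exact Or.inl (Sum.inr_injective h.symm)
        · exact Or.inr h
    exact ((hP.finite_past t₁ ht₁tr).insert t₁).subset hsub
  · push_neg at hex
    convert Set.finite_empty
    ext t
    simp only [mem_setOf_eq, mem_empty_iff_false, iff_false]
    intro ht
    obtain ⟨c, _, hc2⟩ := (Relation.TransGen.tail'_iff).mp ht
    cases c with
    | inl y => exact absurd hc2 (by simp [RawProc.rel])
    | inr t₂ =>
      have h2 : 0 < P.Fts t₂ x := hc2
      have := hex t₂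
      omega

lemma isProc_swap {P : RawProc N} (hP : IsProc N P) {p q : N.Amb}
    (hsw : Swappable P p q) : IsProc N (P.swap p q) := by
  obtain ⟨hp, hq, hpi, hpq, hqp⟩ := hsw
  have hFst : ∀ x t : N.Amb, (P.swap p q).Fst x t =
      if x = p then P.Fst q t else if x = q then P.Fst p t else P.Fst x t :=
    fun x t => swap_Fst P p q x t
  constructor
  · -- fst_dom
    intro x t h
    rw [hFst] at h
    split_ifs at h with h1 h2
    · exact ⟨h1 ▸ hp, (hP.fst_dom q t h).2⟩
    · exact ⟨h2 ▸ hq, (hP.fst_dom p t h).2⟩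
    · exact hP.fst_dom x t h
  · exact hP.fts_dom
  · exact hP.pre_unique
  · exact hP.pre_le_one
  · -- post_unique
    intro x t t' h h'
    rw [hFst] at h h'
    split_ifs at h h' with h1 h2
    · exact hP.post_unique q t t' h h'
    · exact hP.post_unique p t t' h h'
    · exact hP.post_unique x t t' h h'
  · -- post_le_one
    intro x t
    rw [hFst]
    split_ifs <;> exact hP.post_le_one _ _
  · exact swap_acyclic hP ⟨hp, hq, hpi, hpq, hqp⟩
  · -- finite_past
    intro u hu
    have hsub : {t : N.Amb | (P.swap p q).causal (Sum.inr t) (Sum.inr u)} ⊆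
        {t : N.Amb | P.causal (Sum.inr t) (Sum.inr u)} ∪
        ({t : N.Amb | P.causal (Sum.inr t) (Sum.inl p)} ∪
         {t : N.Amb | P.causal (Sum.inr t) (Sum.inl q)}) := by
      intro t ht
      rcases swap_causal_cases hP hpq hqp ht with h1 | ⟨h1, h2⟩ | ⟨h1, h2⟩
      · rw [sigma_inr] at h1; exact Or.inl h1
      · rw [sigma_inr] at h1
        rcases h1 with h1 | h1
        · exact Or.inr (Or.inl h1)
        · exact absurd h1 (by simp)
      · rw [sigma_inr] at h1
        rcases h1 with h1 | h1
        · exact Or.inr (Or.inr h1)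
        · exact absurd h1 (by simp)
    exact (((hP.finite_past u hu).union
      ((place_past_finite hP p).union (place_past_finite hP q))).subset hsub)
  · exact hP.init_fin
  · exact hP.init_marking
  · -- pre_fin
    intro t ht
    have hsub : {x : N.Amb | 0 < (P.swap p q).Fst x t} ⊆
        insert p (insert q {x : N.Amb | 0 < P.Fst x t}) := by
      intro x hx
      rw [mem_setOf_eq, hFst] at hx
      split_ifs at hx with h1 h2
      · exact Or.inl h1
      · exact Or.inr (Or.inl h2)
      · exact Or.inr (Or.inr hx)
    exact (((hP.pre_fin t ht).insert q).insert p).subset hsub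
  · exact hP.post_fin
  · -- pre_match
    intro t ht s
    rw [swap_piT, swap_piS]
    rw [hP.pre_match t ht s]
    set τ : N.Amb → N.Amb := fun x => if x = p then q else if x = q then p else x with hτ
    have hττ : ∀ x, τ (τ x) = x := by
      intro x
      simp only [hτ]
      split_ifs <;> simp_all
    have hmaps : Set.MapsTo τ {x : N.Amb | P.piS x = s} {x : N.Amb | P.piS x = s} := by
      intro x hx
      simp only [mem_setOf_eq, hτ] at hx ⊢
      split_ifs with h1 h2
      · rw [← hpi, ← h1]; exact hx
      · rw [hpi, ← h2]; exact hx
      · exact hx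
    have hbij : Set.BijOn τ {x : N.Amb | P.piS x = s} {x : N.Amb | P.piS x = s} := by
      refine Set.InvOn.bijOn ⟨fun x _ => hττ x, fun x _ => hττ x⟩ hmaps hmaps
    have key : ∀ x t', (P.swap p q).Fst (τ x) t' = P.Fst x t' := by
      intro x t'
      by_cases h1 : x = p
      · have hτp : τ x = q := by simp [hτ, h1]
        rw [hτp, swap_Fst, h1]
        by_cases h2 : q = p
        · rw [if_pos h2, h2]
        · rw [if_neg h2, if_pos rfl]
      · by_cases h2 : x = q
        · have hτq : τ x = p := by simp [hτ, h1, h2]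
          rw [hτq, swap_Fst, if_pos rfl, h2]
        · have hτx : τ x = x := by simp [hτ, h1, h2]
          rw [hτx, swap_Fst, if_neg h1, if_neg h2]
    exact finsum_mem_eq_of_bijOn τ hbij fun x hx => (key x t).symm
  · -- post_match
    intro t ht s
    rw [swap_piT, swap_piS, swap_Fts]
    exact hP.post_match t ht s

end AuxB
section AuxC
open scoped Classical
open Function Set

variable {N : Net}

/-- Membership of a node in a process. -/
def InPr (R : RawProc N) : (N.Amb ⊕ N.Amb) → Prop
  | Sum.inl x => x ∈ R.pl
  | Sum.inr t => t ∈ R.tr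

lemma prefix_rel_back {R Q : RawProc N} (hR : IsProc N R) (hQ : IsProc N Q)
    (h : ProcPrefix N R Q) :
    ∀ z z', InPr R z' → Q.rel z z' → InPr R z ∧ R.rel z z' := by
  obtain ⟨hpl, htr, hflow, hpiS, hpiT, hinit⟩ := h
  rintro (x | t) (y | t')
  · intro _ hrel; exact absurd hrel (by simp [RawProc.rel])
  · -- place x into transition t'
    intro ht' hrel
    have ht'Q : t' ∈ Q.tr := htr ht'
    have hrel' : 0 < Q.Fst x t' := hrel
    set s : N.S := Q.piS x with hs
    set f : N.Amb → ℕ := fun y => R.Fst y t' with hf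
    set g : N.Amb → ℕ := fun y => Q.Fst y t' with hg
    have hfg : support f ⊆ support g := by
      intro y hy
      simp only [hf, mem_support] at hy
      have hy' : 0 < R.Fst y t' := Nat.pos_of_ne_zero hy
      have hyR : y ∈ R.pl := (hR.fst_dom y t' hy').1
      have := (hflow y hyR t' ht').1
      simp only [hg, mem_support, ← this]
      exact hy
    have hgfin : (support g).Finite := by
      have := hQ.pre_fin t' ht'Q
      refine this.subset ?_
      intro y hy
      simp only [hg, mem_support] at hy
      exact Nat.pos_of_ne_zero hy
    have hle : ∀ y ∈ {y : N.Amb | Q.piS y = s}, f y ≤ g y := by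
      intro y _
      rcases Nat.eq_zero_or_pos (f y) with h0 | hpos
      · omega
      · have hyR : y ∈ R.pl := (hR.fst_dom y t' hpos).1
        exact le_of_eq (hflow y hyR t' ht').1
    have hsum : ∑ᶠ y ∈ {y : N.Amb | Q.piS y = s}, f y = ∑ᶠ y ∈ {y : N.Amb | Q.piS y = s}, g y := by
      have e1 : ∑ᶠ y ∈ {y : N.Amb | Q.piS y = s}, f y = ∑ᶠ y ∈ {y : N.Amb | R.piS y = s}, f y := by
        refine finsum_mem_support_congr ?_
        ext y
        simp only [mem_inter_iff, mem_setOf_eq, mem_support, hf]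
        constructor
        · rintro ⟨h1, h2⟩
          have hyR : y ∈ R.pl := (hR.fst_dom y t' (Nat.pos_of_ne_zero h2)).1
          exact ⟨by rw [hpiS y hyR]; exact h1, h2⟩
        · rintro ⟨h1, h2⟩
          have hyR : y ∈ R.pl := (hR.fst_dom y t' (Nat.pos_of_ne_zero h2)).1
          exact ⟨by rw [← hpiS y hyR]; exact h1, h2⟩
      have e2 : ∑ᶠ y ∈ {y : N.Amb | R.piS y = s}, f y = N.pre (R.piT t') s :=
        (hR.pre_match t' ht' s).symm
      have e3 : ∑ᶠ y ∈ {y : N.Amb | Q.piS y = s}, g y = N.pre (Q.piT t') s :=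
        (hQ.pre_match t' ht'Q s).symm
      rw [e1, e2, e3, hpiT t' ht']
    have heq := finsum_mem_nat_eqOn hgfin hfg hle hsum x (by simp [hs])
    have hx : 0 < R.Fst x t' := by
      simp only [hf, hg] at heq
      omega
    exact ⟨(hR.fst_dom x t' hx).1, hx⟩
  · -- transition t into place y
    intro hy hrel
    have hrel' : 0 < Q.Fts t y := hrel
    by_cases hyi : y ∈ R.init
    · rw [hinit] at hyi
      exact absurd (hyi.2 t) (by omega)
    · have : ∃ t₀, R.Fts t₀ y ≠ 0 := by
        by_contra hc
        push_neg at hc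
        exact hyi ⟨hy, hc⟩
      obtain ⟨t₀, ht₀⟩ := this
      have ht₀' : 0 < R.Fts t₀ y := Nat.pos_of_ne_zero ht₀
      have ht₀R : t₀ ∈ R.tr := (hR.fts_dom t₀ y ht₀').2
      have hQt₀ : 0 < Q.Fts t₀ y := by
        rw [← (hflow y hy t₀ ht₀R).2]; exact ht₀'
      have : t = t₀ := hQ.pre_unique y t t₀ hrel' hQt₀
      subst this
      exact ⟨ht₀R, ht₀'⟩
  · intro _ hrel; exact absurd hrel (by simp [RawProc.rel])

lemma prefix_causal_back {R Q : RawProc N} (hR : IsProc N R) (hQ : IsProc N Q)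
    (h : ProcPrefix N R Q) {z z' : N.Amb ⊕ N.Amb} (hz' : InPr R z')
    (hc : Q.causal z z') : InPr R z ∧ R.causal z z' := by
  induction hc using Relation.TransGen.head_induction_on with
  | single hrel =>
    obtain ⟨h1, h2⟩ := prefix_rel_back hR hQ h _ _ hz' hrel
    exact ⟨h1, Relation.TransGen.single h2⟩
  | head hrel _ ih =>
    obtain ⟨h1, h2⟩ := prefix_rel_back hR hQ h _ _ ih.1 hrel
    exact ⟨h1, Relation.TransGen.head h2 ih.2⟩

lemma prefix_swap_both {A B : RawProc N} (h : ProcPrefix N A B) {p q : N.Amb}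
    (hp : p ∈ A.pl) (hq : q ∈ A.pl) : ProcPrefix N (A.swap p q) (B.swap p q) := by
  obtain ⟨hpl, htr, hflow, hpiS, hpiT, hinit⟩ := h
  refine ⟨hpl, htr, ?_, hpiS, hpiT, ?_⟩
  · intro x hx t ht
    refine ⟨?_, (hflow x hx t ht).2⟩
    rw [swap_Fst, swap_Fst]
    split_ifs
    · exact (hflow q hq t ht).1
    · exact (hflow p hp t ht).1
    · exact (hflow x hx t ht).1
  · rw [swap_init, swap_init]; exact hinit

end AuxC
section AuxD
open scoped Classical
open Function Set

variable {N : Net}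

noncomputable def nextT (A : RawProc N) (x : N.Amb) : Option N.Amb :=
  if h : ∃ t, 0 < A.Fst x t then some h.choose else none

noncomputable def postEnum (A : RawProc N) (t : N.Amb) (k : ℕ) : Option N.Amb :=
  if h : {y | 0 < A.Fts t y}.Countable ∧ {y | 0 < A.Fts t y}.Nonempty then
    some ((h.1.exists_eq_range h.2).choose k)
  else none

noncomputable def runStep (A : RawProc N) (o : Option N.Amb) (k : ℕ) : Option N.Amb :=
  o.bind fun t => (postEnum A t k).bind fun y => nextT A y

noncomputable def run (A : RawProc N) (x : N.Amb) (l : List ℕ) : Option N.Amb :=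
  List.foldl (runStep A) (nextT A x) l

lemma nextT_eq {A : RawProc N} (hA : IsProc N A) {x t : N.Amb} (h : 0 < A.Fst x t) :
    nextT A x = some t := by
  have h' : ∃ t', 0 < A.Fst x t' := ⟨t, h⟩
  rw [nextT, dif_pos h']
  exact congrArg some (hA.post_unique x h'.choose t h'.choose_spec h)

lemma postEnum_exists {A : RawProc N} (ht : t ∈ A.tr) (hA : IsProc N A) {y : N.Amb}
    (h : 0 < A.Fts t y) : ∃ k, postEnum A t k = some y := by
  have h' : {y | 0 < A.Fts t y}.Countable ∧ {y | 0 < A.Fts t y}.Nonempty :=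
    ⟨(hA.post_fin t ht).countable, ⟨y, h⟩⟩
  have hspec := (h'.1.exists_eq_range h'.2).choose_spec
  have hy : y ∈ range (h'.1.exists_eq_range h'.2).choose := by rw [← hspec]; exact h
  obtain ⟨k, hk⟩ := hy
  refine ⟨k, ?_⟩
  rw [postEnum, dif_pos h', hk]

lemma run_append (A : RawProc N) (x : N.Amb) (l : List ℕ) (k : ℕ) :
    run A x (l ++ [k]) = runStep A (run A x l) k := by
  simp [run, List.foldl_append]

lemma causal_run {A : RawProc N} (hA : IsProc N A) {x : N.Amb} {z : N.Amb ⊕ N.Amb}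
    (h : A.causal (Sum.inl x) z) :
    (∀ t, z = Sum.inr t → ∃ l, run A x l = some t) ∧
    (∀ y, z = Sum.inl y → y = x ∨ ∃ t l, run A x l = some t ∧ 0 < A.Fts t y) := by
  induction h with
  | single hrel =>
    rename_i z'
    cases z' with
    | inl y => exact absurd hrel (by simp [RawProc.rel])
    | inr t =>
      constructor
      · rintro t' heq
        obtain rfl : t = t' := Sum.inr_injective heq
        exact ⟨[], nextT_eq hA hrel⟩
      · rintro y heq
        exact absurd heq (by simp)
  | @tail b c hcl hrel ih =>
    cases b with
    | inl y =>
      cases c with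
      | inl y2 => exact absurd hrel (by simp [RawProc.rel])
      | inr t2 =>
        have hrel' : 0 < A.Fst y t2 := hrel
        constructor
        · rintro t' heq
          obtain rfl : t2 = t' := Sum.inr_injective heq
          rcases ih.2 y rfl with rfl | ⟨t, l, hrun, hty⟩
          · exact ⟨[], nextT_eq hA hrel'⟩
          · obtain ⟨k, hk⟩ := postEnum_exists ((hA.fts_dom t y hty).2) hA hty
            refine ⟨l ++ [k], ?_⟩
            rw [run_append, hrun]
            simp [runStep, hk, nextT_eq hA hrel']
        · rintro y2 heq
          exact absurd heq (by simp)
    | inr t =>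
      cases c with
      | inl y2 =>
        have hrel' : 0 < A.Fts t y2 := hrel
        constructor
        · rintro t' heq
          exact absurd heq (by simp)
        · rintro y heq
          obtain rfl : y2 = y := Sum.inl_injective heq
          obtain ⟨l, hl⟩ := ih.1 t rfl
          exact Or.inr ⟨t, l, hl, hrel'⟩
      | inr t2 => exact absurd hrel (by simp [RawProc.rel])

lemma exists_init_below {A : RawProc N} (hA : IsProc N A) :
    ∀ t ∈ A.tr, ∃ x ∈ A.init, A.causal (Sum.inl x) (Sum.inr t) := by
  suffices H : ∀ n, ∀ t, t ∈ A.tr →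
      {t' : N.Amb | A.causal (Sum.inr t') (Sum.inr t)}.ncard = n →
      ∃ x ∈ A.init, A.causal (Sum.inl x) (Sum.inr t) by
    intro t ht
    exact H _ t ht rfl
  intro n
  induction n using Nat.strong_induction_on with
  | _ n ihn =>
    intro t ht hn
    obtain ⟨s₀, hs₀⟩ := N.pre_ne (A.piT t)
    rw [hA.pre_match t ht s₀] at hs₀
    obtain ⟨y, _, hyp⟩ := finsum_mem_pos_exists hs₀
    have hypl : y ∈ A.pl := (hA.fst_dom y t hyp).1
    by_cases hyi : ∀ t', A.Fts t' y = 0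
    · exact ⟨y, ⟨hypl, hyi⟩, Relation.TransGen.single hyp⟩
    · push_neg at hyi
      obtain ⟨t₁, ht₁⟩ := hyi
      have ht₁p : 0 < A.Fts t₁ y := Nat.pos_of_ne_zero ht₁
      have ht₁tr : t₁ ∈ A.tr := (hA.fts_dom t₁ y ht₁p).2
      have hc : A.causal (Sum.inr t₁) (Sum.inr t) :=
        Relation.TransGen.head (show A.rel (Sum.inr t₁) (Sum.inl y) from ht₁p)
          (Relation.TransGen.single (show A.rel (Sum.inl y) (Sum.inr t) from hyp))
      have hss : {t' : N.Amb | A.causal (Sum.inr t') (Sum.inr t₁)} ⊂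
          {t' : N.Amb | A.causal (Sum.inr t') (Sum.inr t)} := by
        constructor
        · intro a ha
          exact Relation.TransGen.trans ha hc
        · intro hsub
          exact hA.acyclic _ (hsub hc)
      have hlt : {t' : N.Amb | A.causal (Sum.inr t') (Sum.inr t₁)}.ncard < n :=
        hn ▸ Set.ncard_lt_ncard hss (hA.finite_past t ht)
      obtain ⟨x, hx, hcx⟩ := ihn _ hlt t₁ ht₁tr rfl
      exact ⟨x, hx, Relation.TransGen.trans hcx hc⟩

/-- Size bound: the places and transitions of a GR-process are at most as
numerous as `S ⊕ T ⊕ ℕ`. -/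
lemma isProc_small {A : RawProc N} (hA : IsProc N A) :
    Cardinal.mk A.pl ≤ Cardinal.mk (N.S ⊕ N.T ⊕ ℕ) ∧
    Cardinal.mk A.tr ≤ Cardinal.mk (N.S ⊕ N.T ⊕ ℕ) := by
  set κ := Cardinal.mk (N.S ⊕ N.T ⊕ ℕ) with hκ
  have haleph : Cardinal.aleph0 ≤ κ := by
    rw [← Cardinal.mk_nat, hκ, Cardinal.le_def]
    exact ⟨⟨fun n => Sum.inr (Sum.inr n), fun a b h => by simpa using h⟩⟩
  have hS : Cardinal.mk N.S ≤ κ := by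
    rw [hκ, Cardinal.le_def]
    exact ⟨⟨Sum.inl, fun a b h => by simpa using h⟩⟩
  -- init is small
  have hinit : Cardinal.mk A.init ≤ κ := by
    have hsub : A.init ⊆ ⋃ s : N.S, {x | x ∈ A.init ∧ A.piS x = s} := by
      intro x hx
      exact Set.mem_iUnion.mpr ⟨A.piS x, hx, rfl⟩
    calc Cardinal.mk A.init
        ≤ Cardinal.mk (⋃ s : N.S, {x | x ∈ A.init ∧ A.piS x = s}) :=
          Cardinal.mk_le_mk_of_subset hsub
      _ ≤ Cardinal.sum (fun s : N.S => Cardinal.mk {x | x ∈ A.init ∧ A.piS x = s}) :=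
          Cardinal.mk_iUnion_le_sum_mk
      _ ≤ Cardinal.sum (fun _ : N.S => Cardinal.aleph0) := by
          refine Cardinal.sum_le_sum _ _ fun s => ?_
          exact Cardinal.mk_le_aleph0_iff.mpr (hA.init_fin s).countable.to_subtype
      _ = Cardinal.mk N.S * Cardinal.aleph0 := Cardinal.sum_const' _ _
      _ ≤ κ * κ := mul_le_mul' hS haleph
      _ = κ := Cardinal.mul_eq_self haleph
  -- transitions are small
  have htr : Cardinal.mk A.tr ≤ κ := by
    have hstep : ∀ t : A.tr, ∃ xl : A.init × List ℕ, run A xl.1.1 xl.2 = some t.1 := by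
      rintro ⟨t, ht⟩
      obtain ⟨x, hx, hc⟩ := exists_init_below hA t ht
      obtain ⟨l, hl⟩ := (causal_run hA hc).1 t rfl
      exact ⟨(⟨x, hx⟩, l), hl⟩
    choose J hJ using hstep
    have hJinj : Injective J := by
      intro a b heq
      have := hJ a
      rw [heq, hJ b] at this
      exact Subtype.ext (Option.some_injective _ this).symm
    have h1 : Cardinal.mk A.tr ≤ Cardinal.mk (A.init × List ℕ) :=
      (Cardinal.le_def _ _).mpr ⟨⟨J, hJinj⟩⟩
    refine h1.trans ?_
    rw [Cardinal.mk_prod]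
    simp only [Cardinal.lift_id, Cardinal.mk_list_eq_aleph0]
    calc Cardinal.mk A.init * Cardinal.aleph0 ≤ κ * κ := mul_le_mul' hinit haleph
      _ = κ := Cardinal.mul_eq_self haleph
  refine ⟨?_, htr⟩
  -- non-initial places are small
  have hni : Cardinal.mk (A.pl \ A.init : Set N.Amb) ≤ κ := by
    have hsub : (A.pl \ A.init : Set N.Amb) ⊆ ⋃ t : A.tr, {y | 0 < A.Fts t.1 y} := by
      rintro x ⟨hx, hxn⟩
      have hex : ∃ t, 0 < A.Fts t x := by
        by_contra hc
        push_neg at hc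
        exact hxn ⟨hx, fun t => Nat.le_zero.mp (hc t)⟩
      obtain ⟨t, ht⟩ := hex
      exact Set.mem_iUnion.mpr ⟨⟨t, (hA.fts_dom t x ht).2⟩, ht⟩
    calc Cardinal.mk (A.pl \ A.init : Set N.Amb)
        ≤ Cardinal.mk (⋃ t : A.tr, {y | 0 < A.Fts t.1 y}) :=
          Cardinal.mk_le_mk_of_subset hsub
      _ ≤ Cardinal.sum (fun t : A.tr => Cardinal.mk {y | 0 < A.Fts t.1 y}) :=
          Cardinal.mk_iUnion_le_sum_mk
      _ ≤ Cardinal.sum (fun _ : A.tr => Cardinal.aleph0) := by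
          refine Cardinal.sum_le_sum _ _ fun t => ?_
          exact Cardinal.mk_le_aleph0_iff.mpr (hA.post_fin t.1 t.2).countable.to_subtype
      _ = Cardinal.mk A.tr * Cardinal.aleph0 := Cardinal.sum_const' _ _
      _ ≤ κ * κ := mul_le_mul' htr haleph
      _ = κ := Cardinal.mul_eq_self haleph
  have hsplit : A.pl ⊆ A.init ∪ (A.pl \ A.init) := by
    intro x hx
    by_cases h : x ∈ A.init
    · exact Or.inl h
    · exact Or.inr ⟨hx, h⟩
  calc Cardinal.mk A.pl ≤ Cardinal.mk (A.init ∪ (A.pl \ A.init) : Set N.Amb) :=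
        Cardinal.mk_le_mk_of_subset hsplit
    _ ≤ Cardinal.mk A.init + Cardinal.mk (A.pl \ A.init : Set N.Amb) :=
        Cardinal.mk_union_le _ _
    _ ≤ κ + κ := add_le_add hinit hni
    _ = κ := Cardinal.add_eq_self haleph

/-- Fresh names: an injection on `D` avoiding `W`. -/
lemma exists_fresh (D W : Set N.Amb)
    (hD : Cardinal.mk D ≤ Cardinal.mk (N.S ⊕ N.T ⊕ ℕ))
    (hW : Cardinal.mk W ≤ Cardinal.mk (N.S ⊕ N.T ⊕ ℕ)) :
    ∃ f : N.Amb → N.Amb, Set.InjOn f D ∧ ∀ y ∈ D, f y ∉ W := by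
  set κ := Cardinal.mk (N.S ⊕ N.T ⊕ ℕ) with hκ
  have haleph : Cardinal.aleph0 ≤ κ := by
    rw [← Cardinal.mk_nat, hκ, Cardinal.le_def]
    exact ⟨⟨fun n => Sum.inr (Sum.inr n), fun a b h => by simpa using h⟩⟩
  have hAmb : Cardinal.mk N.Amb = 2 ^ κ := by
    rw [show N.Amb = Set (N.S ⊕ N.T ⊕ ℕ) from rfl, Cardinal.mk_set]
  have hWc : κ ≤ Cardinal.mk (Wᶜ : Set N.Amb) := by
    by_contra hc
    push_neg at hc
    have h1 : Cardinal.mk N.Amb ≤ κ := by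
      rw [← Cardinal.mk_sum_compl W]
      calc Cardinal.mk W + Cardinal.mk (Wᶜ : Set N.Amb) ≤ κ + κ :=
            add_le_add hW hc.le
        _ = κ := Cardinal.add_eq_self haleph
    rw [hAmb] at h1
    exact absurd (lt_of_lt_of_le (Cardinal.cantor κ) h1) (lt_irrefl κ)
  obtain ⟨e⟩ := (Cardinal.le_def _ _).mp (hD.trans hWc)
  refine ⟨fun y => if h : y ∈ D then (e ⟨y, h⟩).1 else y, ?_, ?_⟩
  · intro a ha b hb heq
    simp only [dif_pos ha, dif_pos hb] at heq
    have := e.injective (Subtype.ext heq)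
    simpa using congrArg Subtype.val this
  · intro y hy
    simp only [dif_pos hy]
    exact (e ⟨y, hy⟩).2

end AuxD
section AuxE
open scoped Classical
open Function Set

variable {N : Net}

/-- Transport of a raw process along a pair of renaming maps. -/
noncomputable def renameProc (Q : RawProc N) (gp gt : N.Amb → N.Amb) : RawProc N where
  pl := gp '' Q.pl
  tr := gt '' Q.tr
  Fst := fun x t => if x ∈ gp '' Q.pl ∧ t ∈ gt '' Q.tr then
      Q.Fst (Function.invFunOn gp Q.pl x) (Function.invFunOn gt Q.tr t) else 0
  Fts := fun t x => if x ∈ gp '' Q.pl ∧ t ∈ gt '' Q.tr then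
      Q.Fts (Function.invFunOn gt Q.tr t) (Function.invFunOn gp Q.pl x) else 0
  piS := fun x => Q.piS (Function.invFunOn gp Q.pl x)
  piT := fun t => Q.piT (Function.invFunOn gt Q.tr t)

variable {Q : RawProc N} {gp gt : N.Amb → N.Amb}

lemma rinv_p {f : N.Amb → N.Amb} {s : Set N.Amb} (_ : Set.InjOn f s) {x : N.Amb}
    (hx : x ∈ f '' s) :
    Function.invFunOn f s x ∈ s ∧ f (Function.invFunOn f s x) = x := by
  obtain ⟨y, hy, rfl⟩ := hx
  exact ⟨Function.invFunOn_mem ⟨y, hy, rfl⟩, Function.invFunOn_eq ⟨y, hy, rfl⟩⟩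

lemma linv_p {f : N.Amb → N.Amb} {s : Set N.Amb} (hf : Set.InjOn f s) {y : N.Amb}
    (hy : y ∈ s) : Function.invFunOn f s (f y) = y :=
  hf.leftInvOn_invFunOn hy

lemma rename_pl : (renameProc Q gp gt).pl = gp '' Q.pl := rfl
lemma rename_tr : (renameProc Q gp gt).tr = gt '' Q.tr := rfl

lemma rename_Fst_eq (hgp : Set.InjOn gp Q.pl) (hgt : Set.InjOn gt Q.tr)
    {y u : N.Amb} (hy : y ∈ Q.pl) (hu : u ∈ Q.tr) :
    (renameProc Q gp gt).Fst (gp y) (gt u) = Q.Fst y u := by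
  have h : gp y ∈ gp '' Q.pl ∧ gt u ∈ gt '' Q.tr := ⟨⟨y, hy, rfl⟩, ⟨u, hu, rfl⟩⟩
  simp only [renameProc, if_pos h, linv_p hgp hy, linv_p hgt hu]

lemma rename_Fts_eq (hgp : Set.InjOn gp Q.pl) (hgt : Set.InjOn gt Q.tr)
    {y u : N.Amb} (hy : y ∈ Q.pl) (hu : u ∈ Q.tr) :
    (renameProc Q gp gt).Fts (gt u) (gp y) = Q.Fts u y := by
  have h : gp y ∈ gp '' Q.pl ∧ gt u ∈ gt '' Q.tr := ⟨⟨y, hy, rfl⟩, ⟨u, hu, rfl⟩⟩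
  simp only [renameProc, if_pos h, linv_p hgp hy, linv_p hgt hu]

lemma rename_Fst_pos {x t : N.Amb} (h : 0 < (renameProc Q gp gt).Fst x t) :
    x ∈ gp '' Q.pl ∧ t ∈ gt '' Q.tr ∧
      0 < Q.Fst (Function.invFunOn gp Q.pl x) (Function.invFunOn gt Q.tr t) := by
  by_cases hc : x ∈ gp '' Q.pl ∧ t ∈ gt '' Q.tr
  · refine ⟨hc.1, hc.2, ?_⟩
    have : (renameProc Q gp gt).Fst x t =
        Q.Fst (Function.invFunOn gp Q.pl x) (Function.invFunOn gt Q.tr t) := by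
      simp only [renameProc, if_pos hc]
    omega
  · have : (renameProc Q gp gt).Fst x t = 0 := by simp only [renameProc, if_neg hc]
    omega

lemma rename_Fts_pos {x t : N.Amb} (h : 0 < (renameProc Q gp gt).Fts t x) :
    x ∈ gp '' Q.pl ∧ t ∈ gt '' Q.tr ∧
      0 < Q.Fts (Function.invFunOn gt Q.tr t) (Function.invFunOn gp Q.pl x) := by
  by_cases hc : x ∈ gp '' Q.pl ∧ t ∈ gt '' Q.tr
  · refine ⟨hc.1, hc.2, ?_⟩
    have : (renameProc Q gp gt).Fts t x =
        Q.Fts (Function.invFunOn gt Q.tr t) (Function.invFunOn gp Q.pl x) := by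
      simp only [renameProc, if_pos hc]
    omega
  · have : (renameProc Q gp gt).Fts t x = 0 := by simp only [renameProc, if_neg hc]
    omega

lemma rename_init (hQ : IsProc N Q) (hgp : Set.InjOn gp Q.pl) (hgt : Set.InjOn gt Q.tr) :
    (renameProc Q gp gt).init = gp '' Q.init := by
  ext x
  constructor
  · rintro ⟨hx, hfts⟩
    obtain ⟨y, hy, rfl⟩ := (hx : x ∈ gp '' Q.pl)
    refine ⟨y, ⟨hy, fun t₀ => ?_⟩, rfl⟩
    by_cases ht₀ : t₀ ∈ Q.tr
    · have := hfts (gt t₀)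
      rw [rename_Fts_eq hgp hgt hy ht₀] at this
      exact this
    · by_contra hpos
      exact ht₀ (hQ.fts_dom t₀ y (Nat.pos_of_ne_zero hpos)).2
  · rintro ⟨y, hy, rfl⟩
    refine ⟨⟨y, hy.1, rfl⟩, fun t => ?_⟩
    by_cases hc : 0 < (renameProc Q gp gt).Fts t (gp y)
    · obtain ⟨h1, h2, h3⟩ := rename_Fts_pos hc
      rw [linv_p hgp hy.1] at h3
      rw [hy.2 _] at h3
      omega
    · omega

lemma rename_rel_to (hgp : Set.InjOn gp Q.pl) (hgt : Set.InjOn gt Q.tr)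
    {z z' : N.Amb ⊕ N.Amb} (h : (renameProc Q gp gt).rel z z') :
    Q.rel (Sum.map (Function.invFunOn gp Q.pl) (Function.invFunOn gt Q.tr) z)
      (Sum.map (Function.invFunOn gp Q.pl) (Function.invFunOn gt Q.tr) z') := by
  cases z with
  | inl x =>
    cases z' with
    | inl y => exact absurd h (by simp [RawProc.rel])
    | inr t => exact (rename_Fst_pos h).2.2
  | inr t =>
    cases z' with
    | inl x => exact (rename_Fts_pos h).2.2
    | inr u => exact absurd h (by simp [RawProc.rel])

lemma rename_causal_to (hgp : Set.InjOn gp Q.pl) (hgt : Set.InjOn gt Q.tr)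
    {z z' : N.Amb ⊕ N.Amb} (h : (renameProc Q gp gt).causal z z') :
    Q.causal (Sum.map (Function.invFunOn gp Q.pl) (Function.invFunOn gt Q.tr) z)
      (Sum.map (Function.invFunOn gp Q.pl) (Function.invFunOn gt Q.tr) z') :=
  Relation.TransGen.lift (Sum.map (Function.invFunOn gp Q.pl) (Function.invFunOn gt Q.tr))
    (fun _ _ hr => rename_rel_to hgp hgt hr) _ _ h

lemma rename_init_fiber (hQ : IsProc N Q) (hgp : Set.InjOn gp Q.pl)
    (hgt : Set.InjOn gt Q.tr) (s : N.S) :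
    {x | x ∈ (renameProc Q gp gt).init ∧ (renameProc Q gp gt).piS x = s}
      = gp '' {x | x ∈ Q.init ∧ Q.piS x = s} := by
  ext x
  constructor
  · rintro ⟨hx, hpiS⟩
    rw [rename_init hQ hgp hgt] at hx
    obtain ⟨y, hy, rfl⟩ := hx
    refine ⟨y, ⟨hy, ?_⟩, rfl⟩
    rw [← hpiS]
    show Q.piS y = Q.piS (Function.invFunOn gp Q.pl (gp y))
    rw [linv_p hgp hy.1]
  · rintro ⟨y, ⟨hy1, hy2⟩, rfl⟩
    refine ⟨?_, ?_⟩
    · rw [rename_init hQ hgp hgt]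
      exact ⟨y, hy1, rfl⟩
    · show Q.piS (Function.invFunOn gp Q.pl (gp y)) = s
      rw [linv_p hgp hy1.1]
      exact hy2

lemma rename_isProc (hQ : IsProc N Q) (hgp : Set.InjOn gp Q.pl) (hgt : Set.InjOn gt Q.tr) :
    IsProc N (renameProc Q gp gt) := by
  set invp := Function.invFunOn gp Q.pl with hinvp
  set invt := Function.invFunOn gt Q.tr with hinvt
  constructor
  · intro x t h
    obtain ⟨h1, h2, _⟩ := rename_Fst_pos h
    exact ⟨h1, h2⟩
  · intro t x h
    obtain ⟨h1, h2, _⟩ := rename_Fts_pos h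
    exact ⟨h1, h2⟩
  · -- pre_unique
    intro x t t' h h'
    obtain ⟨h1, h2, h3⟩ := rename_Fts_pos h
    obtain ⟨_, h2', h3'⟩ := rename_Fts_pos h'
    have heq : invt t = invt t' := hQ.pre_unique (invp x) (invt t) (invt t') h3 h3'
    rw [← (rinv_p hgt h2).2, ← (rinv_p hgt h2').2]
    exact congrArg gt heq
  · -- pre_le_one
    intro t x
    by_cases hc : x ∈ gp '' Q.pl ∧ t ∈ gt '' Q.tr
    · have : (renameProc Q gp gt).Fts t x = Q.Fts (invt t) (invp x) := by
        simp only [renameProc, if_pos hc, hinvp, hinvt]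
      rw [this]
      exact hQ.pre_le_one _ _
    · have : (renameProc Q gp gt).Fts t x = 0 := by simp only [renameProc, if_neg hc]
      omega
  · -- post_unique
    intro x t t' h h'
    obtain ⟨h1, h2, h3⟩ := rename_Fst_pos h
    obtain ⟨_, h2', h3'⟩ := rename_Fst_pos h'
    have heq : invt t = invt t' := hQ.post_unique (invp x) (invt t) (invt t') h3 h3'
    rw [← (rinv_p hgt h2).2, ← (rinv_p hgt h2').2]
    exact congrArg gt heq
  · -- post_le_one
    intro x t
    by_cases hc : x ∈ gp '' Q.pl ∧ t ∈ gt '' Q.tr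
    · have : (renameProc Q gp gt).Fst x t = Q.Fst (invp x) (invt t) := by
        simp only [renameProc, if_pos hc, hinvp, hinvt]
      rw [this]
      exact hQ.post_le_one _ _
    · have : (renameProc Q gp gt).Fst x t = 0 := by simp only [renameProc, if_neg hc]
      omega
  · -- acyclic
    intro z hz
    exact hQ.acyclic _ (rename_causal_to hgp hgt hz)
  · -- finite_past
    intro u hu
    obtain ⟨u₀, hu₀, rfl⟩ := (hu : u ∈ gt '' Q.tr)
    have hsub : {t : N.Amb | (renameProc Q gp gt).causal (Sum.inr t) (Sum.inr (gt u₀))} ⊆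
        gt '' {t₀ : N.Amb | Q.causal (Sum.inr t₀) (Sum.inr u₀)} := by
      intro t ht
      have hmem : t ∈ gt '' Q.tr := by
        obtain ⟨c, hc1, _⟩ := (Relation.TransGen.head'_iff).mp ht
        cases c with
        | inl x => exact (rename_Fts_pos hc1).2.1
        | inr t2 => exact absurd hc1 (by simp [RawProc.rel])
      have hc := rename_causal_to hgp hgt ht
      simp only [Sum.map_inr] at hc
      rw [linv_p hgt hu₀] at hc
      exact ⟨invt t, hc, (rinv_p hgt hmem).2⟩
    exact ((hQ.finite_past u₀ hu₀).image gt).subset hsub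
  · -- init_fin
    intro s
    rw [rename_init_fiber hQ hgp hgt s]
    exact (hQ.init_fin s).image gp
  · -- init_marking
    intro s
    rw [rename_init_fiber hQ hgp hgt s,
      Set.ncard_image_of_injOn (hgp.mono (fun x hx => hx.1.1))]
    exact hQ.init_marking s
  · -- pre_fin
    intro t ht
    obtain ⟨u, hu, rfl⟩ := (ht : t ∈ gt '' Q.tr)
    have hsub : {x : N.Amb | 0 < (renameProc Q gp gt).Fst x (gt u)} ⊆
        gp '' {x : N.Amb | 0 < Q.Fst x u} := by
      intro x hx
      obtain ⟨h1, _, h3⟩ := rename_Fst_pos hx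
      rw [linv_p hgt hu] at h3
      exact ⟨invp x, h3, (rinv_p hgp h1).2⟩
    exact ((hQ.pre_fin u hu).image gp).subset hsub
  · -- post_fin
    intro t ht
    obtain ⟨u, hu, rfl⟩ := (ht : t ∈ gt '' Q.tr)
    have hsub : {x : N.Amb | 0 < (renameProc Q gp gt).Fts (gt u) x} ⊆
        gp '' {x : N.Amb | 0 < Q.Fts u x} := by
      intro x hx
      obtain ⟨h1, _, h3⟩ := rename_Fts_pos hx
      rw [linv_p hgt hu] at h3
      exact ⟨invp x, h3, (rinv_p hgp h1).2⟩
    exact ((hQ.post_fin u hu).image gp).subset hsub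
  · -- pre_match
    intro t ht s
    obtain ⟨u, hu, rfl⟩ := (ht : t ∈ gt '' Q.tr)
    have hpiT : (renameProc Q gp gt).piT (gt u) = Q.piT u := by
      show Q.piT (Function.invFunOn gt Q.tr (gt u)) = Q.piT u
      rw [linv_p hgt hu]
    rw [hpiT, hQ.pre_match u hu s]
    set f : N.Amb → ℕ := fun y => Q.Fst y u with hf
    set g : N.Amb → ℕ := fun x => (renameProc Q gp gt).Fst x (gt u) with hg
    have hsupf : support f ⊆ Q.pl := fun y hy => (hQ.fst_dom y u (Nat.pos_of_ne_zero hy)).1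
    have key : ∀ y ∈ {y : N.Amb | Q.piS y = s} ∩ support f, f y = g (gp y) := by
      rintro y ⟨_, hyf⟩
      have hy : y ∈ Q.pl := hsupf hyf
      simp only [hg]
      rw [rename_Fst_eq hgp hgt hy hu]
    have hbij : Set.BijOn gp ({y : N.Amb | Q.piS y = s} ∩ support f)
        (gp '' ({y : N.Amb | Q.piS y = s} ∩ support f)) :=
      (hgp.mono (fun y hy => hsupf hy.2)).bijOn_image
    have hsets : {x : N.Amb | (renameProc Q gp gt).piS x = s} ∩ support g
        = gp '' ({y : N.Amb | Q.piS y = s} ∩ support f) := by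
      ext x
      constructor
      · rintro ⟨hx1, hx2⟩
        have hpos : 0 < (renameProc Q gp gt).Fst x (gt u) := Nat.pos_of_ne_zero hx2
        obtain ⟨h1, _, h3⟩ := rename_Fst_pos hpos
        rw [linv_p hgt hu] at h3
        refine ⟨Function.invFunOn gp Q.pl x, ⟨hx1, by simp only [hf, mem_support]; omega⟩,
          (rinv_p hgp h1).2⟩
      · rintro ⟨y, ⟨hy1, hy2⟩, rfl⟩
        have hy : y ∈ Q.pl := hsupf hy2
        constructor
        · show Q.piS (Function.invFunOn gp Q.pl (gp y)) = s
          rw [linv_p hgp hy]; exact hy1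
        · simp only [hg, mem_support]
          rw [rename_Fst_eq hgp hgt hy hu]
          exact hy2
    calc ∑ᶠ y ∈ {y : N.Amb | Q.piS y = s}, f y
        = ∑ᶠ y ∈ {y : N.Amb | Q.piS y = s} ∩ support f, f y :=
          (finsum_mem_inter_support f _).symm
      _ = ∑ᶠ x ∈ gp '' ({y : N.Amb | Q.piS y = s} ∩ support f), g x :=
          finsum_mem_eq_of_bijOn gp hbij key
      _ = ∑ᶠ x ∈ {x : N.Amb | (renameProc Q gp gt).piS x = s} ∩ support g, g x := by
          rw [hsets]
      _ = ∑ᶠ x ∈ {x : N.Amb | (renameProc Q gp gt).piS x = s}, g x :=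
          finsum_mem_inter_support g _
  · -- post_match
    intro t ht s
    obtain ⟨u, hu, rfl⟩ := (ht : t ∈ gt '' Q.tr)
    have hpiT : (renameProc Q gp gt).piT (gt u) = Q.piT u := by
      show Q.piT (Function.invFunOn gt Q.tr (gt u)) = Q.piT u
      rw [linv_p hgt hu]
    rw [hpiT, hQ.post_match u hu s]
    set f : N.Amb → ℕ := fun y => Q.Fts u y with hf
    set g : N.Amb → ℕ := fun x => (renameProc Q gp gt).Fts (gt u) x with hg
    have hsupf : support f ⊆ Q.pl := fun y hy => (hQ.fts_dom u y (Nat.pos_of_ne_zero hy)).1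
    have key : ∀ y ∈ {y : N.Amb | Q.piS y = s} ∩ support f, f y = g (gp y) := by
      rintro y ⟨_, hyf⟩
      have hy : y ∈ Q.pl := hsupf hyf
      simp only [hg]
      rw [rename_Fts_eq hgp hgt hy hu]
    have hbij : Set.BijOn gp ({y : N.Amb | Q.piS y = s} ∩ support f)
        (gp '' ({y : N.Amb | Q.piS y = s} ∩ support f)) :=
      (hgp.mono (fun y hy => hsupf hy.2)).bijOn_image
    have hsets : {x : N.Amb | (renameProc Q gp gt).piS x = s} ∩ support g
        = gp '' ({y : N.Amb | Q.piS y = s} ∩ support f) := by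
      ext x
      constructor
      · rintro ⟨hx1, hx2⟩
        have hpos : 0 < (renameProc Q gp gt).Fts (gt u) x := Nat.pos_of_ne_zero hx2
        obtain ⟨h1, _, h3⟩ := rename_Fts_pos hpos
        rw [linv_p hgt hu] at h3
        refine ⟨Function.invFunOn gp Q.pl x, ⟨hx1, by simp only [hf, mem_support]; omega⟩,
          (rinv_p hgp h1).2⟩
      · rintro ⟨y, ⟨hy1, hy2⟩, rfl⟩
        have hy : y ∈ Q.pl := hsupf hy2
        constructor
        · show Q.piS (Function.invFunOn gp Q.pl (gp y)) = s
          rw [linv_p hgp hy]; exact hy1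
        · simp only [hg, mem_support]
          rw [rename_Fts_eq hgp hgt hy hu]
          exact hy2
    calc ∑ᶠ y ∈ {y : N.Amb | Q.piS y = s}, f y
        = ∑ᶠ y ∈ {y : N.Amb | Q.piS y = s} ∩ support f, f y :=
          (finsum_mem_inter_support f _).symm
      _ = ∑ᶠ x ∈ gp '' ({y : N.Amb | Q.piS y = s} ∩ support f), g x :=
          finsum_mem_eq_of_bijOn gp hbij key
      _ = ∑ᶠ x ∈ {x : N.Amb | (renameProc Q gp gt).piS x = s} ∩ support g, g x := by
          rw [hsets]
      _ = ∑ᶠ x ∈ {x : N.Amb | (renameProc Q gp gt).piS x = s}, g x :=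
          finsum_mem_inter_support g _

end AuxE
section AuxF
open scoped Classical
open Function Set

variable {N : Net}

lemma rename_iso {Q : RawProc N} {gp gt : N.Amb → N.Amb} (hQ : IsProc N Q)
    (hgp : Set.InjOn gp Q.pl) (hgt : Set.InjOn gt Q.tr) :
    Iso N (renameProc Q gp gt) Q := by
  refine ⟨Function.invFunOn gp Q.pl, Function.invFunOn gt Q.tr, ?_, ?_, ?_, ?_, ?_, ?_⟩
  · refine ⟨fun x hx => (rinv_p hgp hx).1, ?_, ?_⟩
    · intro a ha b hb heq
      rw [← (rinv_p hgp ha).2, ← (rinv_p hgp hb).2]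
      exact congrArg gp heq
    · intro y hy
      exact ⟨gp y, ⟨y, hy, rfl⟩, linv_p hgp hy⟩
  · refine ⟨fun t ht => (rinv_p hgt ht).1, ?_, ?_⟩
    · intro a ha b hb heq
      rw [← (rinv_p hgt ha).2, ← (rinv_p hgt hb).2]
      exact congrArg gt heq
    · intro u hu
      exact ⟨gt u, ⟨u, hu, rfl⟩, linv_p hgt hu⟩
  · intro x hx t ht
    have hc : x ∈ gp '' Q.pl ∧ t ∈ gt '' Q.tr := ⟨hx, ht⟩
    constructor <;> · simp only [renameProc]; rw [if_pos hc]
  · intro x hx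
    rw [rename_init hQ hgp hgt]
    constructor
    · rintro ⟨y, hy, rfl⟩
      rw [linv_p hgp hy.1]
      exact hy
    · intro h
      exact ⟨Function.invFunOn gp Q.pl x, h, (rinv_p hgp hx).2⟩
  · intro x _; rfl
  · intro t _; rfl

lemma iso_prefix_pullback {A B Q : RawProc N} (hA : IsProc N A) (hB : IsProc N B)
    (hQ : IsProc N Q) (hiso : Iso N A B) (hpre : ProcPrefix N B Q) :
    ∃ Q', IsProc N Q' ∧ ProcPrefix N A Q' ∧ Iso N Q' Q := by
  obtain ⟨fp, ft, hfpb, hftb, hflow, hinit, hpiS, hpiT⟩ := hiso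
  obtain ⟨hpl, htr, hQflow, hQpiS, hQpiT, hQinit⟩ := hpre
  obtain ⟨frp, hfrp_inj, hfrp_avoid⟩ := exists_fresh (Q.pl \ B.pl) A.pl
    (le_trans (Cardinal.mk_le_mk_of_subset diff_subset) (isProc_small hQ).1) (isProc_small hA).1
  obtain ⟨frt, hfrt_inj, hfrt_avoid⟩ := exists_fresh (Q.tr \ B.tr) A.tr
    (le_trans (Cardinal.mk_le_mk_of_subset diff_subset) (isProc_small hQ).2) (isProc_small hA).2
  set invA : N.Amb → N.Amb := Function.invFunOn fp A.pl with hinvA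
  set invT : N.Amb → N.Amb := Function.invFunOn ft A.tr with hinvT
  set gp : N.Amb → N.Amb := fun y => if y ∈ B.pl then invA y else frp y with hgp_def
  set gt : N.Amb → N.Amb := fun y => if y ∈ B.tr then invT y else frt y with hgt_def
  -- basic facts about gp
  have hgpB : ∀ y ∈ B.pl, gp y ∈ A.pl ∧ fp (gp y) = y := by
    intro y hy
    have h1 := rinv_p hfpb.injOn (hfpb.surjOn hy)
    simp only [hgp_def, if_pos hy]
    exact h1
  have hgp_fp : ∀ x ∈ A.pl, gp (fp x) = x := by
    intro x hx
    have hfx : fp x ∈ B.pl := hfpb.mapsTo hx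
    simp only [hgp_def, if_pos hfx]
    exact linv_p hfpb.injOn hx
  have hgtB : ∀ u ∈ B.tr, gt u ∈ A.tr ∧ ft (gt u) = u := by
    intro u hu
    have h1 := rinv_p hftb.injOn (hftb.surjOn hu)
    simp only [hgt_def, if_pos hu]
    exact h1
  have hgt_ft : ∀ t ∈ A.tr, gt (ft t) = t := by
    intro t ht
    have hft : ft t ∈ B.tr := hftb.mapsTo ht
    simp only [hgt_def, if_pos hft]
    exact linv_p hftb.injOn ht
  have hgpInj : Set.InjOn gp Q.pl := by
    intro a ha b hb heq
    by_cases haB : a ∈ B.pl <;> by_cases hbB : b ∈ B.pl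
    · rw [← (hgpB a haB).2, ← (hgpB b hbB).2]
      exact congrArg fp (by simpa [hgp_def, haB, hbB] using heq)
    · exfalso
      apply hfrp_avoid b ⟨hb, hbB⟩
      rw [show frp b = gp b by simp [hgp_def, hbB], ← heq]
      simpa only [hgp_def, if_pos haB] using (hgpB a haB).1
    · exfalso
      apply hfrp_avoid a ⟨ha, haB⟩
      rw [show frp a = gp a by simp [hgp_def, haB], heq]
      simpa only [hgp_def, if_pos hbB] using (hgpB b hbB).1
    · exact hfrp_inj ⟨ha, haB⟩ ⟨hb, hbB⟩ (by simpa [hgp_def, haB, hbB] using heq)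
  have hgtInj : Set.InjOn gt Q.tr := by
    intro a ha b hb heq
    by_cases haB : a ∈ B.tr <;> by_cases hbB : b ∈ B.tr
    · rw [← (hgtB a haB).2, ← (hgtB b hbB).2]
      exact congrArg ft (by simpa [hgt_def, haB, hbB] using heq)
    · exfalso
      apply hfrt_avoid b ⟨hb, hbB⟩
      rw [show frt b = gt b by simp [hgt_def, hbB], ← heq]
      simpa only [hgt_def, if_pos haB] using (hgtB a haB).1
    · exfalso
      apply hfrt_avoid a ⟨ha, haB⟩
      rw [show frt a = gt a by simp [hgt_def, haB], heq]
      simpa only [hgt_def, if_pos hbB] using (hgtB b hbB).1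
    · exact hfrt_inj ⟨ha, haB⟩ ⟨hb, hbB⟩ (by simpa [hgt_def, haB, hbB] using heq)
  refine ⟨renameProc Q gp gt, rename_isProc hQ hgpInj hgtInj, ?_, rename_iso hQ hgpInj hgtInj⟩
  -- ProcPrefix N A (renameProc Q gp gt)
  have hApl : ∀ x ∈ A.pl, fp x ∈ Q.pl ∧ gp (fp x) = x :=
    fun x hx => ⟨hpl (hfpb.mapsTo hx), hgp_fp x hx⟩
  have hAtr : ∀ t ∈ A.tr, ft t ∈ Q.tr ∧ gt (ft t) = t :=
    fun t ht => ⟨htr (hftb.mapsTo ht), hgt_ft t ht⟩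
  have hplsub : A.pl ⊆ (renameProc Q gp gt).pl := by
    intro x hx
    exact ⟨fp x, (hApl x hx).1, (hApl x hx).2⟩
  have htrsub : A.tr ⊆ (renameProc Q gp gt).tr := by
    intro t ht
    exact ⟨ft t, (hAtr t ht).1, (hAtr t ht).2⟩
  have hinvp_fp : ∀ x ∈ A.pl, Function.invFunOn gp Q.pl x = fp x := by
    intro x hx
    have h1 := rinv_p hgpInj (hplsub hx)
    exact hgpInj h1.1 (hApl x hx).1 (by rw [h1.2, (hApl x hx).2])
  have hinvt_ft : ∀ t ∈ A.tr, Function.invFunOn gt Q.tr t = ft t := by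
    intro t ht
    have h1 := rinv_p hgtInj (htrsub ht)
    exact hgtInj h1.1 (hAtr t ht).1 (by rw [h1.2, (hAtr t ht).2])
  refine ⟨hplsub, htrsub, ?_, ?_, ?_, ?_⟩
  · intro x hx t ht
    have hmem : x ∈ gp '' Q.pl ∧ t ∈ gt '' Q.tr := ⟨hplsub hx, htrsub ht⟩
    have hfpB : fp x ∈ B.pl := hfpb.mapsTo hx
    have hftB : ft t ∈ B.tr := hftb.mapsTo ht
    constructor
    · rw [show (renameProc Q gp gt).Fst x t =
          Q.Fst (Function.invFunOn gp Q.pl x) (Function.invFunOn gt Q.tr t) by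
            simp only [renameProc, if_pos hmem],
        hinvp_fp x hx, hinvt_ft t ht, ← (hQflow (fp x) hfpB (ft t) hftB).1,
        (hflow x hx t ht).1]
    · rw [show (renameProc Q gp gt).Fts t x =
          Q.Fts (Function.invFunOn gt Q.tr t) (Function.invFunOn gp Q.pl x) by
            simp only [renameProc, if_pos hmem],
        hinvp_fp x hx, hinvt_ft t ht, ← (hQflow (fp x) hfpB (ft t) hftB).2,
        (hflow x hx t ht).2]
  · intro x hx
    show A.piS x = Q.piS (Function.invFunOn gp Q.pl x)
    rw [hinvp_fp x hx, ← hQpiS (fp x) (hfpb.mapsTo hx), hpiS x hx]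
  · intro t ht
    show A.piT t = Q.piT (Function.invFunOn gt Q.tr t)
    rw [hinvt_ft t ht, ← hQpiT (ft t) (hftb.mapsTo ht), hpiT t ht]
  · rw [rename_init hQ hgpInj hgtInj, ← hQinit]
    ext x
    constructor
    · intro hx
      have hxpl : x ∈ A.pl := hx.1
      refine ⟨fp x, (hinit x hxpl).mp hx, hgp_fp x hxpl⟩
    · rintro ⟨y, hy, rfl⟩
      have hyB : y ∈ B.pl := hy.1
      have h1 := hgpB y hyB
      have : gp y ∈ A.init := (hinit (gp y) h1.1).mpr (by rw [h1.2]; exact hy)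
      exact this

lemma oneSwap_prefix_step {P R Q₂ : RawProc N} (hstep : OneSwap N P R) (hQ₂ : IsProc N Q₂)
    (hpre : ProcPrefix N R Q₂) :
    ∃ Q₃, IsProc N Q₃ ∧ ProcPrefix N P Q₃ ∧ OneSwap N Q₃ Q₂ := by
  obtain ⟨hP, hR, p, q, hsw, hiso⟩ := hstep
  have hPsw : IsProc N (P.swap p q) := isProc_swap hP hsw
  obtain ⟨Q₄, hQ₄, hpre₄, hiso₄⟩ := iso_prefix_pullback hPsw hR hQ₂ hiso hpre
  have hpQ : p ∈ Q₄.pl := hpre₄.1 (show p ∈ (P.swap p q).pl from hsw.1)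
  have hqQ : q ∈ Q₄.pl := hpre₄.1 (show q ∈ (P.swap p q).pl from hsw.2.1)
  have hpiQ : Q₄.piS p = Q₄.piS q := by
    rw [← hpre₄.2.2.2.1 p hsw.1, ← hpre₄.2.2.2.1 q hsw.2.1]
    exact hsw.2.2.1
  have hncpq : ¬ Q₄.causal (Sum.inl p) (Sum.inl q) := fun hc =>
    (swap_not_causal_pq hP hsw).1
      (prefix_causal_back hPsw hQ₄ hpre₄ (show InPr (P.swap p q) (Sum.inl q) from hsw.2.1) hc).2
  have hncqp : ¬ Q₄.causal (Sum.inl q) (Sum.inl p) := fun hc =>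
    (swap_not_causal_pq hP hsw).2
      (prefix_causal_back hPsw hQ₄ hpre₄ (show InPr (P.swap p q) (Sum.inl p) from hsw.1) hc).2
  have hswQ₄ : Swappable Q₄ p q := ⟨hpQ, hqQ, hpiQ, hncpq, hncqp⟩
  refine ⟨Q₄.swap p q, isProc_swap hQ₄ hswQ₄, ?_, ?_⟩
  · have h := prefix_swap_both hpre₄ (show p ∈ (P.swap p q).pl from hsw.1)
      (show q ∈ (P.swap p q).pl from hsw.2.1)
    rwa [swap_swap] at h
  · exact ⟨isProc_swap hQ₄ hswQ₄, hQ₂, p, q, swappable_swap hQ₄ hswQ₄,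
      by rw [swap_swap]; exact hiso₄⟩

end AuxF
/-- Swapping-equivalent prefixes can be rearranged: if `P ≡₁* P' ≤ Q`, then
there exists `Q'` with `P ≤ Q' ≡₁* Q`. -/
theorem swapEqv_past_extension (N : Net) (P P' Q : RawProc N)
    (hP : IsProc N P) (hP' : IsProc N P') (hQ : IsProc N Q)
    (h1 : SwapEqv N P P') (h2 : ProcPrefix N P' Q) :
    ∃ Q', IsProc N Q' ∧ ProcPrefix N P Q' ∧ SwapEqv N Q' Q := by
  refine Relation.ReflTransGen.head_induction_on
    (motive := fun X _ => IsProc N X →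
      ∃ Q', IsProc N Q' ∧ ProcPrefix N X Q' ∧ SwapEqv N Q' Q) h1 ?_ ?_ hP
  · intro _
    exact ⟨Q, hQ, h2, Relation.ReflTransGen.refl⟩
  · intro X c h' hrest ih _
    obtain ⟨Q₂, hQ₂, hpre₂, heqv₂⟩ := ih h'.2.1
    obtain ⟨Q₃, hQ₃, hpre₃, hone₃⟩ := oneSwap_prefix_step h' hQ₂ hpre₂
    exact ⟨Q₃, hQ₃, hpre₃, Relation.ReflTransGen.head hone₃ heqv₂⟩
end
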